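/- arXiv:1806.07964 — 5 statements merged into one kernel-verified Lean document; each statement's English description precedes it below -/
import Mathlib

section
/- For all s > 0 and x > 0, (e^{-sx} + sx - 1)/x = ∫₀^∞ (1 - e^{-s²t/2})(1 - e^{-x²/(2t)}) / √(2πt³) dt. -/
open Real MeasureTheory Set

section SqSub
lemma sq_derivW : ∀ v ∈ Ioi (0:ℝ), HasDerivWithinAt (fun v : ℝ => v^2) (2*v) (Ioi 0) v :=
  fun v _ => by simpa using (hasDerivAt_pow 2 v).hasDerivWithinAt

lemma sq_injOn : InjOn (fun v : ℝ => v^2) (Ioi 0) := by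
  intro a ha b hb h
  simp only at h
  nlinarith [mem_Ioi.mp ha, mem_Ioi.mp hb]

lemma sq_image : (fun v : ℝ => v^2) '' (Ioi 0) = Ioi 0 := by
  ext y
  constructor
  · rintro ⟨v, hv, rfl⟩; exact pow_pos (mem_Ioi.mp hv) 2
  · intro hy
    exact ⟨Real.sqrt y, Real.sqrt_pos.mpr hy, Real.sq_sqrt (le_of_lt hy)⟩

lemma integral_sq_sub (g : ℝ → ℝ) :
    ∫ t in Ioi (0:ℝ), g t = ∫ v in Ioi (0:ℝ), (2*v) * g (v^2) := by
  have := integral_image_eq_integral_abs_deriv_smul measurableSet_Ioi sq_derivW sq_injOn g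
  rw [sq_image] at this
  rw [this]
  refine setIntegral_congr_fun measurableSet_Ioi fun v hv => ?_
  rw [smul_eq_mul, abs_of_pos (by have := mem_Ioi.mp hv; positivity : (0:ℝ) < 2*v)]

lemma integrableOn_sq_sub (g : ℝ → ℝ) :
    IntegrableOn g (Ioi 0) ↔ IntegrableOn (fun v => (2*v) * g (v^2)) (Ioi 0) := by
  have := integrableOn_image_iff_integrableOn_abs_deriv_smul measurableSet_Ioi sq_derivW sq_injOn g
  rw [sq_image] at this
  rw [this]
  constructor <;> intro h <;>
    [skip; skip] <;>
    refine h.congr_fun (fun v hv => ?_) measurableSet_Ioi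
  · beta_reduce; rw [smul_eq_mul, abs_of_pos (by have := mem_Ioi.mp hv; positivity : (0:ℝ) < 2*v)]
  · rw [smul_eq_mul, abs_of_pos (by have := mem_Ioi.mp hv; positivity : (0:ℝ) < 2*v)]
end SqSub


-- Glasser core
lemma glasser_core {c : ℝ} (hc : 0 < c) :
    ∫ v in Ioi (0:ℝ), Real.exp (-(v - c/v)^2) = Real.sqrt π / 2 := by
  set f : ℝ → ℝ := fun v => v - c/v with hf
  have hderiv : ∀ v ∈ Ioi (0:ℝ), HasDerivAt f (1 + c/v^2) v := by
    intro v hv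
    have hv0 : v ≠ 0 := ne_of_gt hv
    have h1 : HasDerivAt (fun v : ℝ => c / v) (-(c / v^2)) v := by
      simpa [div_eq_mul_inv, sq] using ((hasDerivAt_inv hv0).const_mul c)
    simpa [sub_neg_eq_add] using (hasDerivAt_id v).fun_sub h1
  have hmono : StrictMonoOn f (Ioi (0:ℝ)) := by
    intro a ha b hb hab
    have ha0 : (0:ℝ) < a := ha
    have hb0 : (0:ℝ) < b := hb
    have : c / b < c / a := by
      exact div_lt_div_of_pos_left hc ha0 hab
    simp only [hf]
    nlinarith
  have hinj : InjOn f (Ioi (0:ℝ)) := hmono.injOn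
  have himg : f '' (Ioi (0:ℝ)) = univ := by
    apply eq_univ_of_forall
    intro w
    set v : ℝ := (w + Real.sqrt (w^2 + 4*c)) / 2 with hv
    have hr : Real.sqrt (w^2 + 4*c) ^ 2 = w^2 + 4*c := by
      rw [sq_sqrt]; nlinarith [sq_nonneg w]
    have hvpos : (0:ℝ) < v := by
      have h1 : |w| < Real.sqrt (w^2 + 4*c) := by
        rw [← Real.sqrt_sq_eq_abs]
        exact Real.sqrt_lt_sqrt (sq_nonneg w) (by linarith)
      have := neg_abs_le w
      rw [hv]; nlinarith [abs_nonneg w]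
    have hvne : v ≠ 0 := ne_of_gt hvpos
    have key : v^2 - w * v - c = 0 := by rw [hv]; nlinarith [hr]
    refine ⟨v, hvpos, ?_⟩
    simp only [hf]
    field_simp
    nlinarith [key]
  have hderivW : ∀ v ∈ Ioi (0:ℝ), HasDerivWithinAt f (1 + c/v^2) (Ioi 0) v :=
    fun v hv => (hderiv v hv).hasDerivWithinAt
  -- step A
  have hA := integral_image_eq_integral_abs_deriv_smul measurableSet_Ioi hderivW hinj
      (fun y => Real.exp (-y^2))
  rw [himg] at hA
  have hgauss : ∫ y : ℝ, Real.exp (-y^2) = Real.sqrt π := by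
    have := integral_gaussian (1:ℝ)
    simpa using this
  rw [Measure.restrict_univ, hgauss] at hA
  have habs : ∀ v ∈ Ioi (0:ℝ), |1 + c/v^2| • Real.exp (-(f v)^2)
      = (1 + c/v^2) * Real.exp (-(v - c/v)^2) := by
    intro v hv
    have hv0 : (0:ℝ) < v := hv
    rw [smul_eq_mul, abs_of_pos (by positivity)]
  rw [setIntegral_congr_fun measurableSet_Ioi habs] at hA
  -- step A integrability
  have hsum : IntegrableOn (fun v => (1 + c/v^2) * Real.exp (-(v - c/v)^2)) (Ioi 0) := by
    have := (integrableOn_image_iff_integrableOn_abs_deriv_smul measurableSet_Ioi hderivW hinj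
      (fun y => Real.exp (-y^2))).mp ?_
    · exact (this.congr_fun habs measurableSet_Ioi)
    · rw [himg, integrableOn_univ]
      simpa using integrable_exp_neg_mul_sq (one_pos : (0:ℝ) < 1)
  have e1 : IntegrableOn (fun v => Real.exp (-(v - c/v)^2)) (Ioi 0) := by
    apply Integrable.mono hsum (Measurable.aestronglyMeasurable (by fun_prop)).restrict
    rw [ae_restrict_iff' measurableSet_Ioi]
    filter_upwards with v hv
    have hv0 : (0:ℝ) < v := hv
    have h1 : (1:ℝ) ≤ 1 + c/v^2 := by
      have : 0 < c/v^2 := by positivity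
      linarith
    rw [Real.norm_eq_abs, Real.norm_eq_abs, abs_of_pos (Real.exp_pos _),
      abs_of_pos (by positivity : (0:ℝ) < (1 + c/v^2) * Real.exp (-(v - c/v)^2))]
    nlinarith [Real.exp_pos (-(v - c/v)^2)]
  have e2 : IntegrableOn (fun v => (c/v^2) * Real.exp (-(v - c/v)^2)) (Ioi 0) := by
    have := hsum.sub e1
    apply this.congr
    filter_upwards with v
    simp only [Pi.sub_apply]
    ring
  -- step B : substitution v ↦ c / v
  have hBderiv : ∀ v ∈ Ioi (0:ℝ), HasDerivWithinAt (fun v : ℝ => c / v) (-(c/v^2)) (Ioi 0) v := by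
    intro v hv
    have hv0 : v ≠ 0 := ne_of_gt hv
    exact (by simpa [div_eq_mul_inv, sq] using ((hasDerivAt_inv hv0).const_mul c) :
      HasDerivAt (fun v : ℝ => c / v) (-(c/v^2)) v).hasDerivWithinAt
  have hBinj : InjOn (fun v : ℝ => c / v) (Ioi 0) := by
    intro a ha b hb h
    have ha0 : a ≠ 0 := ne_of_gt ha
    have hb0 : b ≠ 0 := ne_of_gt hb
    rw [div_eq_div_iff (ne_of_gt ha) (ne_of_gt hb)] at h
    exact mul_left_cancel₀ (ne_of_gt hc) (by linarith)
  have hBimg : (fun v : ℝ => c / v) '' (Ioi 0) = Ioi 0 := by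
    ext y
    constructor
    · rintro ⟨v, hv, rfl⟩; exact div_pos hc hv
    · intro hy
      exact ⟨c / y, div_pos hc hy, by field_simp⟩
  have hB := integral_image_eq_integral_abs_deriv_smul measurableSet_Ioi hBderiv hBinj
      (fun y => Real.exp (-(y - c/y)^2))
  rw [hBimg] at hB
  have hBcongr : ∀ v ∈ Ioi (0:ℝ), |(-(c/v^2))| • Real.exp (-((c/v) - c/(c/v))^2)
      = (c/v^2) * Real.exp (-(v - c/v)^2) := by
    intro v hv
    have hv0 : v ≠ 0 := ne_of_gt hv
    have hc0 : c ≠ 0 := ne_of_gt hc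
    have h1 : c / (c / v) = v := by field_simp
    rw [h1, smul_eq_mul, abs_neg, abs_of_pos (by positivity : (0:ℝ) < c/v^2)]
    congr 1
    rw [← neg_sub v (c/v), neg_sq]
  rw [setIntegral_congr_fun measurableSet_Ioi hBcongr] at hB
  -- combine
  have hsplit : ∫ v in Ioi (0:ℝ), (1 + c/v^2) * Real.exp (-(v - c/v)^2)
      = (∫ v in Ioi (0:ℝ), Real.exp (-(v - c/v)^2))
        + ∫ v in Ioi (0:ℝ), (c/v^2) * Real.exp (-(v - c/v)^2) := by
    rw [← integral_add e1 e2]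
    congr 1
    funext v
    ring
  rw [hsplit, ← hB] at hA
  linarith


lemma glasser_sq {a b : ℝ} (ha : 0 < a) (hb : 0 < b) :
    ∫ v in Ioi (0:ℝ), Real.exp (-(a*v^2) - b/v^2)
      = Real.sqrt (π/a) / 2 * Real.exp (-(2 * Real.sqrt (a*b))) := by
  have hsa : (0:ℝ) < Real.sqrt a := Real.sqrt_pos.mpr ha
  have hab : (0:ℝ) < Real.sqrt (a*b) := Real.sqrt_pos.mpr (mul_pos ha hb)
  have key : ∀ v ∈ Ioi (0:ℝ), Real.exp (-(a*v^2) - b/v^2)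
      = Real.exp (-(2 * Real.sqrt (a*b))) * Real.exp (-(Real.sqrt a * v - Real.sqrt (a*b)/(Real.sqrt a * v))^2) := by
    intro v hv
    have hv0 : (0:ℝ) < v := hv
    rw [← Real.exp_add]
    congr 1
    have h1 : Real.sqrt (a*b) / (Real.sqrt a * v) = Real.sqrt b / v := by
      rw [Real.sqrt_mul (le_of_lt ha)]
      field_simp
    rw [h1]
    have h2 : Real.sqrt a ^ 2 = a := Real.sq_sqrt (le_of_lt ha)
    have h3 : Real.sqrt b ^ 2 = b := Real.sq_sqrt (le_of_lt hb)
    have h4 : Real.sqrt a * Real.sqrt b = Real.sqrt (a*b) := (Real.sqrt_mul (le_of_lt ha) b).symm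
    have expand : (Real.sqrt a * v - Real.sqrt b/v)^2 = a*v^2 - 2*Real.sqrt (a*b) + b/v^2 := by
      have e1 : (Real.sqrt a * v - Real.sqrt b/v)^2
          = (Real.sqrt a)^2*v^2 - 2*(Real.sqrt a*Real.sqrt b) + (Real.sqrt b)^2/v^2 := by
        field_simp
        ring_nf
      rw [e1, h2, h3, h4]
    rw [expand]
    ring
  rw [setIntegral_congr_fun measurableSet_Ioi key, integral_const_mul]
  have := integral_comp_mul_left_Ioi
    (fun y => Real.exp (-(y - Real.sqrt (a*b)/y)^2)) 0 hsa
  simp only [mul_zero] at this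
  rw [this, glasser_core hab, smul_eq_mul]
  rw [Real.sqrt_div (le_of_lt Real.pi_pos)]
  ring

lemma laplace_sqrt {u b : ℝ} (hu : 0 < u) (hb : 0 < b) :
    ∫ t in Ioi (0:ℝ), Real.exp (-(u*t) - b/t) / Real.sqrt t
      = Real.sqrt (π/u) * Real.exp (-(2 * Real.sqrt (u*b))) := by
  rw [integral_sq_sub (fun t => Real.exp (-(u*t) - b/t) / Real.sqrt t)]
  have key : ∀ v ∈ Ioi (0:ℝ),
      (2*v) * (Real.exp (-(u*v^2) - b/v^2) / Real.sqrt (v^2))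
        = 2 * Real.exp (-(u*v^2) - b/v^2) := by
    intro v hv
    have hv0 : (0:ℝ) < v := hv
    rw [Real.sqrt_sq (le_of_lt hv0)]
    field_simp
  rw [setIntegral_congr_fun measurableSet_Ioi key, integral_const_mul, glasser_sq hu hb]
  ring

lemma laplace_sqrt' {u : ℝ} (hu : 0 < u) :
    ∫ t in Ioi (0:ℝ), Real.exp (-(u*t)) / Real.sqrt t = Real.sqrt (π/u) := by
  rw [integral_sq_sub (fun t => Real.exp (-(u*t)) / Real.sqrt t)]
  have key : ∀ v ∈ Ioi (0:ℝ),
      (2*v) * (Real.exp (-(u*v^2)) / Real.sqrt (v^2)) = 2 * Real.exp (-(u*v^2)) := by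
    intro v hv
    have hv0 : (0:ℝ) < v := hv
    rw [Real.sqrt_sq (le_of_lt hv0)]
    field_simp
  rw [setIntegral_congr_fun measurableSet_Ioi key, integral_const_mul]
  have hg : ∫ a in Ioi (0:ℝ), Real.exp (-(u*a^2)) = Real.sqrt (π/u)/2 := by
    simpa using integral_gaussian_Ioi u
  rw [hg]
  ring

lemma integrable_laplace_sqrt' {u : ℝ} (hu : 0 < u) :
    IntegrableOn (fun t => Real.exp (-(u*t)) / Real.sqrt t) (Ioi 0) := by
  rw [integrableOn_sq_sub]
  have h0 : Integrable (fun v : ℝ => Real.exp (-u*v^2)) := integrable_exp_neg_mul_sq hu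
  have : IntegrableOn (fun v : ℝ => 2 * Real.exp (-(u*v^2))) (Ioi 0) := by
    have h1 := (h0.const_mul 2).integrableOn (s := Ioi 0)
    simpa [neg_mul] using h1
  have heq : EqOn (fun v : ℝ => 2 * Real.exp (-(u*v^2)))
      (fun v => (2*v) * (Real.exp (-(u*v^2)) / Real.sqrt (v^2))) (Ioi 0) := by
    intro v hv
    have hv0 : (0:ℝ) < v := hv
    simp only
    rw [Real.sqrt_sq (le_of_lt hv0)]
    field_simp
  exact this.congr_fun heq measurableSet_Ioi

lemma integrable_laplace_sqrt {u b : ℝ} (hu : 0 < u) (hb : 0 < b) :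
    IntegrableOn (fun t => Real.exp (-(u*t) - b/t) / Real.sqrt t) (Ioi 0) := by
  apply Integrable.mono (integrable_laplace_sqrt' hu)
    (Measurable.aestronglyMeasurable (by fun_prop)).restrict
  rw [ae_restrict_iff' measurableSet_Ioi]
  filter_upwards with t ht
  have ht0 : (0:ℝ) < t := ht
  have hst : (0:ℝ) < Real.sqrt t := Real.sqrt_pos.mpr ht0
  rw [Real.norm_eq_abs, Real.norm_eq_abs, abs_of_pos (by positivity), abs_of_pos (by positivity)]
  have hbt : (0:ℝ) ≤ b/t := by positivity
  have : Real.exp (-(u*t) - b/t) ≤ Real.exp (-(u*t)) := Real.exp_le_exp.mpr (by linarith)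
  gcongr


lemma one_sub_exp_neg_le {y : ℝ} : 1 - Real.exp (-y) ≤ y := by
  have := Real.add_one_le_exp (-y)
  linarith

lemma one_sub_exp_neg_nonneg {y : ℝ} (hy : 0 ≤ y) : 0 ≤ 1 - Real.exp (-y) := by
  have : Real.exp (-y) ≤ 1 := Real.exp_le_one_iff.mpr (by linarith)
  linarith

-- inner t-integral
lemma inner_t_integral {u b : ℝ} (hu : 0 < u) (hb : 0 < b) :
    ∫ t in Ioi (0:ℝ), Real.exp (-(u*t)) * (1 - Real.exp (-(b/t))) / Real.sqrt t
      = Real.sqrt (π/u) * (1 - Real.exp (-(2 * Real.sqrt (u*b)))) := by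
  have key : ∀ t : ℝ, Real.exp (-(u*t)) * (1 - Real.exp (-(b/t))) / Real.sqrt t
      = Real.exp (-(u*t)) / Real.sqrt t - Real.exp (-(u*t) - b/t) / Real.sqrt t := by
    intro t
    rw [sub_eq_add_neg (-(u*t)), Real.exp_add]
    ring
  simp only [key]
  rw [integral_sub (integrable_laplace_sqrt' hu) (integrable_laplace_sqrt hu hb),
    laplace_sqrt' hu, laplace_sqrt hu hb]
  ring

-- integrability of main integrand
lemma integrable_main {α b : ℝ} (hα : 0 < α) (hb : 0 < b) :
    IntegrableOn (fun t => (1 - Real.exp (-(α*t))) * (1 - Real.exp (-(b/t)))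
      / Real.sqrt (2*π*t^3)) (Ioi 0) := by
  have hsqrt3 : ∀ t : ℝ, 0 < t → Real.sqrt (2*π*t^3) = Real.sqrt (2*π) * (t * Real.sqrt t) := by
    intro t ht
    rw [Real.sqrt_mul (by positivity : (0:ℝ) ≤ 2*π)]
    congr 1
    rw [show t^3 = t^2 * t by ring, Real.sqrt_mul (sq_nonneg t), Real.sqrt_sq ht.le]
  have hbd : ∀ t : ℝ, t ∈ Ioi (0:ℝ) →
      (1 - Real.exp (-(α*t))) * (1 - Real.exp (-(b/t))) / Real.sqrt (2*π*t^3)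
        ≤ (α/Real.sqrt (2*π)) * (1/Real.sqrt t) ∧
      (1 - Real.exp (-(α*t))) * (1 - Real.exp (-(b/t))) / Real.sqrt (2*π*t^3)
        ≤ (b/Real.sqrt (2*π)) * (1/(t^2 * Real.sqrt t)) ∧
      0 ≤ (1 - Real.exp (-(α*t))) * (1 - Real.exp (-(b/t))) / Real.sqrt (2*π*t^3) := by
    intro t ht
    have ht0 : (0:ℝ) < t := ht
    have h1 : 0 ≤ 1 - Real.exp (-(α*t)) := one_sub_exp_neg_nonneg (by positivity)
    have h2 : 0 ≤ 1 - Real.exp (-(b/t)) := one_sub_exp_neg_nonneg (by positivity)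
    have h1' : 1 - Real.exp (-(α*t)) ≤ α*t := one_sub_exp_neg_le
    have h2' : 1 - Real.exp (-(b/t)) ≤ b/t := one_sub_exp_neg_le
    have h1'' : 1 - Real.exp (-(α*t)) ≤ 1 := by
      have := Real.exp_pos (-(α*t)); linarith
    have h2'' : 1 - Real.exp (-(b/t)) ≤ 1 := by
      have := Real.exp_pos (-(b/t)); linarith
    have hs := hsqrt3 t ht0
    have hst : (0:ℝ) < Real.sqrt t := Real.sqrt_pos.mpr ht0
    have hs2π : (0:ℝ) < Real.sqrt (2*π) := Real.sqrt_pos.mpr (by positivity)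
    refine ⟨?_, ?_, by positivity⟩
    · rw [hs, div_le_iff₀ (by positivity)]
      have : (1 - Real.exp (-(α*t))) * (1 - Real.exp (-(b/t))) ≤ α * t := by
        nlinarith
      calc (1 - Real.exp (-(α*t))) * (1 - Real.exp (-(b/t))) ≤ α * t := this
        _ = α/Real.sqrt (2*π) * (1/Real.sqrt t) * (Real.sqrt (2*π) * (t * Real.sqrt t)) := by
            field_simp
    · rw [hs, div_le_iff₀ (by positivity)]
      have : (1 - Real.exp (-(α*t))) * (1 - Real.exp (-(b/t))) ≤ b / t := by
        nlinarith
      calc (1 - Real.exp (-(α*t))) * (1 - Real.exp (-(b/t))) ≤ b / t := this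
        _ = b/Real.sqrt (2*π) * (1/(t^2 * Real.sqrt t)) * (Real.sqrt (2*π) * (t * Real.sqrt t)) := by
            rw [← Real.sq_sqrt ht0.le]
            field_simp
  rw [← Ioc_union_Ioi_eq_Ioi (zero_le_one (α := ℝ)), integrableOn_union]
  constructor
  · -- on Ioc 0 1, dominated by (α/√(2π)) t^(-1/2)
    have base : IntegrableOn (fun t : ℝ => (α/Real.sqrt (2*π)) * (t ^ (-(1/2) : ℝ))) (Ioc 0 1) := by
      have := (intervalIntegral.intervalIntegrable_rpow' (a := 0) (b := 1)
        (by norm_num : (-1:ℝ) < -(1/2)))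
      rw [intervalIntegrable_iff_integrableOn_Ioc_of_le zero_le_one] at this
      exact this.const_mul _
    apply Integrable.mono base (Measurable.aestronglyMeasurable (by fun_prop)).restrict
    rw [ae_restrict_iff' measurableSet_Ioc]
    filter_upwards with t ht
    have ht0 : (0:ℝ) < t := ht.1
    obtain ⟨hb1, _, hpos⟩ := hbd t ht0
    have hrw : t ^ (-(1/2) : ℝ) = 1/Real.sqrt t := by
      rw [Real.rpow_neg ht0.le, Real.sqrt_eq_rpow, one_div, one_div]
    rw [Real.norm_eq_abs, Real.norm_eq_abs, abs_of_nonneg hpos, abs_of_nonneg (by positivity),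
      hrw]
    exact hb1
  · -- on Ioi 1, dominated by (b/√(2π)) t^(-5/2)
    have base : IntegrableOn (fun t : ℝ => (b/Real.sqrt (2*π)) * (t ^ (-(5/2) : ℝ))) (Ioi 1) :=
      (integrableOn_Ioi_rpow_of_lt (by norm_num) one_pos).const_mul _
    apply Integrable.mono base (Measurable.aestronglyMeasurable (by fun_prop)).restrict
    rw [ae_restrict_iff' measurableSet_Ioi]
    filter_upwards with t ht
    have ht0 : (0:ℝ) < t := lt_trans one_pos ht
    obtain ⟨_, hb2, hpos⟩ := hbd t ht0
    have hrw : t ^ (-(5/2) : ℝ) = 1/(t^2 * Real.sqrt t) := by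
      have h2 : (t:ℝ)^(2:ℕ) = t^((2:ℝ)) := by
        rw [← Real.rpow_natCast]; norm_num
      rw [Real.rpow_neg ht0.le, one_div, Real.sqrt_eq_rpow, h2, ← Real.rpow_add ht0]
      norm_num
    rw [Real.norm_eq_abs, Real.norm_eq_abs, abs_of_nonneg hpos, abs_of_nonneg (by positivity),
      hrw]
    exact hb2


lemma one_sub_exp_rep {α t : ℝ} (hα : 0 ≤ α) (ht : 0 < t) :
    ∫ u in Ioc (0:ℝ) α, t * Real.exp (-(u*t)) = 1 - Real.exp (-(α*t)) := by
  rw [← intervalIntegral.integral_of_le hα]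
  have hd : ∀ u ∈ uIcc (0:ℝ) α, HasDerivAt (fun u : ℝ => -Real.exp (-(u*t)))
      (t * Real.exp (-(u*t))) u := by
    intro u _
    have h1 : HasDerivAt (fun u : ℝ => -(u*t)) (-t) u := by
      simpa using ((hasDerivAt_id u).mul_const t).fun_neg
    have h2 := (h1.exp).fun_neg
    refine h2.congr_deriv ?_
    ring
  rw [intervalIntegral.integral_eq_sub_of_hasDerivAt hd (Continuous.intervalIntegrable (by fun_prop) _ _)]
  simp [mul_comm]
  ring

lemma fubini_swap {α b : ℝ} (hα : 0 < α) (hb : 0 < b) :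
    Integrable (Function.uncurry (fun t u => t * Real.exp (-(u*t)) *
        ((1 - Real.exp (-(b/t))) / Real.sqrt (2*π*t^3))))
      ((volume.restrict (Ioi 0)).prod (volume.restrict (Ioc 0 α))) := by
  set f : ℝ → ℝ → ℝ := fun t u => t * Real.exp (-(u*t)) *
        ((1 - Real.exp (-(b/t))) / Real.sqrt (2*π*t^3)) with hf
  rw [integrable_prod_iff]
  · constructor
    · filter_upwards with t
      apply Continuous.integrableOn_Ioc
      simp only [hf, Function.uncurry, div_eq_mul_inv]
      fun_prop
    · apply Integrable.congr (integrable_main hα hb)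
      rw [Filter.EventuallyEq, ae_restrict_iff' measurableSet_Ioi]
      filter_upwards with t ht
      simp only [Function.uncurry_apply_pair]
      have ht0 : (0:ℝ) < t := ht
      have hC : 0 ≤ (1 - Real.exp (-(b/t))) / Real.sqrt (2*π*t^3) := by
        apply div_nonneg (one_sub_exp_neg_nonneg (by positivity)) (Real.sqrt_nonneg _)
      have key : ∀ u ∈ Ioc (0:ℝ) α, ‖f t u‖ = f t u := by
        intro u hu
        rw [Real.norm_eq_abs, abs_of_nonneg]
        have : 0 ≤ t * Real.exp (-(u*t)) := by positivity
        exact mul_nonneg this hC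
      rw [setIntegral_congr_fun measurableSet_Ioc key]
      simp only [hf]
      rw [integral_mul_const, one_sub_exp_rep hα.le ht0, mul_div_assoc]
  · apply Measurable.aestronglyMeasurable
    simp only [hf, Function.uncurry, div_eq_mul_inv]
    fun_prop


lemma sqrt_two_pi_cube {t : ℝ} (ht : 0 < t) :
    Real.sqrt (2*π*t^3) = Real.sqrt (2*π) * (t * Real.sqrt t) := by
  rw [Real.sqrt_mul (by positivity : (0:ℝ) ≤ 2*π)]
  congr 1
  rw [show t^3 = t^2 * t by ring, Real.sqrt_mul (sq_nonneg t), Real.sqrt_sq ht.le]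

theorem levy_identity (s x : ℝ) (hs : 0 < s) (hx : 0 < x) :
    (Real.exp (-(s * x)) + s * x - 1) / x =
      ∫ t in Ioi (0 : ℝ),
        (1 - Real.exp (-(s ^ 2 * t / 2))) * (1 - Real.exp (-(x ^ 2 / (2 * t)))) /
          Real.sqrt (2 * π * t ^ 3) := by
  set α : ℝ := s^2/2 with hαdef
  set b : ℝ := x^2/2 with hbdef
  have hα : 0 < α := by positivity
  have hb : 0 < b := by positivity
  set f : ℝ → ℝ → ℝ := fun t u => t * Real.exp (-(u*t)) *
        ((1 - Real.exp (-(b/t))) / Real.sqrt (2*π*t^3)) with hfdef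
  set g : ℝ → ℝ := fun u => (1 - Real.exp (-(2 * Real.sqrt (u*b)))) / Real.sqrt (2*u) with hgdef
  -- step 0: normalize integrand
  have h0 : ∫ t in Ioi (0:ℝ),
        (1 - Real.exp (-(s ^ 2 * t / 2))) * (1 - Real.exp (-(x ^ 2 / (2 * t)))) /
          Real.sqrt (2 * π * t ^ 3)
      = ∫ t in Ioi (0:ℝ), (1 - Real.exp (-(α*t))) * (1 - Real.exp (-(b/t)))
          / Real.sqrt (2*π*t^3) := by
    congr 1
    funext t
    rw [show s^2*t/2 = α*t by rw [hαdef]; ring, show x^2/(2*t) = b/t by rw [hbdef, div_div]]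
  -- step 1: inner representation
  have h1 : ∫ t in Ioi (0:ℝ), (1 - Real.exp (-(α*t))) * (1 - Real.exp (-(b/t)))
          / Real.sqrt (2*π*t^3)
      = ∫ t in Ioi (0:ℝ), ∫ u in Ioc (0:ℝ) α, f t u := by
    refine setIntegral_congr_fun measurableSet_Ioi fun t ht => ?_
    have ht0 : (0:ℝ) < t := ht
    simp only [hfdef]
    rw [integral_mul_const, one_sub_exp_rep hα.le ht0, mul_div_assoc]
  -- step 2: swap
  have h2 : ∫ t in Ioi (0:ℝ), ∫ u in Ioc (0:ℝ) α, f t u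
      = ∫ u in Ioc (0:ℝ) α, ∫ t in Ioi (0:ℝ), f t u :=
    integral_integral_swap (fubini_swap hα hb)
  -- step 3: compute inner t-integral
  have h3 : ∫ u in Ioc (0:ℝ) α, ∫ t in Ioi (0:ℝ), f t u = ∫ u in Ioc (0:ℝ) α, g u := by
    refine setIntegral_congr_fun measurableSet_Ioc fun u hu => ?_
    have hu0 : (0:ℝ) < u := hu.1
    have hrw : ∀ t ∈ Ioi (0:ℝ), f t u
        = (Real.exp (-(u*t)) * (1 - Real.exp (-(b/t))) / Real.sqrt t) * (Real.sqrt (2*π))⁻¹ := by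
      intro t ht
      have ht0 : (0:ℝ) < t := ht
      have hst : (0:ℝ) < Real.sqrt t := Real.sqrt_pos.mpr ht0
      have h2π : (0:ℝ) < Real.sqrt (2*π) := Real.sqrt_pos.mpr (by positivity)
      simp only [hfdef]
      rw [sqrt_two_pi_cube ht0]
      field_simp
    rw [setIntegral_congr_fun measurableSet_Ioi hrw, integral_mul_const,
      inner_t_integral hu0 hb]
    have hconst : Real.sqrt (π/u) * (Real.sqrt (2*π))⁻¹ = (Real.sqrt (2*u))⁻¹ := by
      rw [Real.sqrt_div (le_of_lt Real.pi_pos), Real.sqrt_mul (by norm_num : (0:ℝ) ≤ 2),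
        Real.sqrt_mul (by norm_num : (0:ℝ) ≤ 2)]
      have hπ : (0:ℝ) < Real.sqrt π := Real.sqrt_pos.mpr Real.pi_pos
      have hu' : (0:ℝ) < Real.sqrt u := Real.sqrt_pos.mpr hu0
      have h2 : (0:ℝ) < Real.sqrt 2 := by positivity
      field_simp
    simp only [hgdef]
    rw [mul_right_comm, hconst]
    exact inv_mul_eq_div _ _
  -- step 4: substitution u = r^2/2
  have h4 : ∫ u in Ioc (0:ℝ) α, g u = ∫ r in Ioo (0:ℝ) s, (1 - Real.exp (-(x*r))) := by
    rw [integral_Ioc_eq_integral_Ioo]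
    have hqd : ∀ r ∈ Ioo (0:ℝ) s, HasDerivWithinAt (fun r : ℝ => r^2/2) r (Ioo 0 s) r := by
      intro r _
      have := (hasDerivAt_pow 2 r).div_const 2
      simpa using this.hasDerivWithinAt
    have hqinj : InjOn (fun r : ℝ => r^2/2) (Ioo 0 s) := by
      intro p hp q hq h
      simp only at h
      nlinarith [hp.1, hq.1]
    have hqimg : (fun r : ℝ => r^2/2) '' (Ioo 0 s) = Ioo 0 α := by
      ext y
      constructor
      · rintro ⟨r, hr, rfl⟩
        exact ⟨by nlinarith [hr.1], by rw [hαdef]; nlinarith [hr.1, hr.2]⟩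
      · intro hy
        refine ⟨Real.sqrt (2*y), ⟨Real.sqrt_pos.mpr (by linarith [hy.1]), ?_⟩, ?_⟩
        · rw [show s = Real.sqrt (s^2) from (Real.sqrt_sq hs.le).symm]
          apply Real.sqrt_lt_sqrt (by linarith [hy.1])
          have := hy.2
          rw [hαdef] at this
          linarith
        · simp only
          rw [Real.sq_sqrt (by linarith [hy.1] : (0:ℝ) ≤ 2*y)]
          ring
    rw [← hqimg, integral_image_eq_integral_abs_deriv_smul measurableSet_Ioo hqd hqinj g]
    refine setIntegral_congr_fun measurableSet_Ioo fun r hr => ?_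
    have hr0 : (0:ℝ) < r := hr.1
    have e1 : Real.sqrt (2*(r^2/2)) = r := by
      rw [show 2*(r^2/2) = r^2 by ring, Real.sqrt_sq hr0.le]
    have e2 : Real.sqrt ((r^2/2)*b) = r*x/2 := by
      rw [hbdef, show r^2/2*(x^2/2) = (r*x/2)^2 by ring, Real.sqrt_sq (by positivity)]
    simp only [hgdef]
    rw [smul_eq_mul, abs_of_pos hr0, e1, e2, show 2*(r*x/2) = x*r by ring]
    field_simp
  -- step 5: final interval integral
  have h5 : ∫ r in Ioo (0:ℝ) s, (1 - Real.exp (-(x*r))) = s + (Real.exp (-(x*s)) - 1)/x := by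
    rw [← integral_Ioc_eq_integral_Ioo, ← intervalIntegral.integral_of_le hs.le]
    have hd : ∀ r ∈ uIcc (0:ℝ) s, HasDerivAt (fun r : ℝ => r + Real.exp (-(x*r))/x)
        (1 - Real.exp (-(x*r))) r := by
      intro r _
      have h1 : HasDerivAt (fun r : ℝ => -(x*r)) (-x) r := by
        simpa using ((hasDerivAt_id r).const_mul x).fun_neg
      have h2 := (h1.exp.div_const x)
      have h3 := (hasDerivAt_id' r).fun_add h2
      refine h3.congr_deriv ?_
      field_simp
      ring
    rw [intervalIntegral.integral_eq_sub_of_hasDerivAt hd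
      (Continuous.intervalIntegrable (by fun_prop) _ _)]
    simp
    ring
  rw [h0, h1, h2, h3, h4, h5, mul_comm x s]
  field_simp
  ring
end

section
/- For s > 0 and x > 0, e^{-sx} = ∫₀^∞ e^{-s²t/2} · (x e^{-x²/(2t)} / √(2πt³)) dt, i.e., the exponential is the Laplace transform at s²/2 of the inverse-Gaussian (stable 1/2) kernel. -/
open Real MeasureTheory Set Filter Topology

noncomputable def Phi (u : ℝ) : ℝ :=
  1/2 + (∫ y in (0:ℝ)..u, Real.exp (-(1/2) * y^2)) / Real.sqrt (2*π)

lemma gauss_cont : Continuous fun y : ℝ => Real.exp (-(1/2) * y^2) := by continuity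

lemma gauss_integrable : Integrable fun y : ℝ => Real.exp (-(1/2) * y^2) :=
  integrable_exp_neg_mul_sq (by norm_num)

lemma Phi_hasDerivAt (u : ℝ) :
    HasDerivAt Phi (Real.exp (-(1/2) * u^2) / Real.sqrt (2*π)) u := by
  have h := intervalIntegral.integral_hasDerivAt_right
    (gauss_cont.intervalIntegrable 0 u)
    (gauss_cont.stronglyMeasurableAtFilter _ _)
    gauss_cont.continuousAt
  exact (h.div_const _).const_add _

lemma gauss_int_Ioi : ∫ y in Ioi (0:ℝ), Real.exp (-(1/2) * y^2) = Real.sqrt (2*π) / 2 := by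
  have := integral_gaussian_Ioi (1/2)
  rw [show π / (1/2 : ℝ) = 2*π by ring] at this
  convert this using 2 with y

lemma Phi_tendsto_atTop : Tendsto Phi atTop (𝓝 1) := by
  have h2π : (0:ℝ) < Real.sqrt (2*π) := Real.sqrt_pos.2 (by positivity)
  have h := intervalIntegral_tendsto_integral_Ioi 0 gauss_integrable.integrableOn tendsto_id
  rw [gauss_int_Ioi] at h
  have := (h.div_const (Real.sqrt (2*π))).const_add (1/2 : ℝ)
  convert this using 2
  · rfl
  field_simp
  ring

lemma Phi_tendsto_atBot : Tendsto Phi atBot (𝓝 0) := by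
  have h2π : (0:ℝ) < Real.sqrt (2*π) := Real.sqrt_pos.2 (by positivity)
  have h := intervalIntegral_tendsto_integral_Iic 0 gauss_integrable.integrableOn
    (tendsto_id (x := atBot (α := ℝ)))
  have hIic : ∫ y in Iic (0:ℝ), Real.exp (-(1/2) * y^2) = Real.sqrt (2*π) / 2 := by
    rw [← gauss_int_Ioi]
    have := integral_comp_neg_Iic (0:ℝ) (fun y : ℝ => Real.exp (-(1/2) * y^2))
    simp only [neg_zero] at this
    rw [← this]
    congr 1 with y
    ring_nf
  rw [hIic] at h
  have h2 := (h.div_const (Real.sqrt (2*π))).const_add (1/2 : ℝ)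
  have heq : ∀ u : ℝ, Phi u = 1/2 + (∫ y in u..(0:ℝ), Real.exp (-(1/2) * y^2)) / Real.sqrt (2*π) * (-1) := by
    intro u
    rw [Phi, intervalIntegral.integral_symm]
    ring
  have h3 : Tendsto (fun u : ℝ => 1/2 + (∫ y in u..(0:ℝ), Real.exp (-(1/2) * y^2)) / Real.sqrt (2*π) * (-1)) atBot (𝓝 (1/2 + (Real.sqrt (2*π)/2) / Real.sqrt (2*π) * (-1))) :=
    ((h.div_const (Real.sqrt (2*π))).mul_const (-1)).const_add (1/2 : ℝ)
  rw [show (1/2 + (Real.sqrt (2*π)/2) / Real.sqrt (2*π) * (-1) : ℝ) = 0 by field_simp; norm_num] at h3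
  exact h3.congr fun u => (heq u).symm

noncomputable def Gfun (s x t : ℝ) : ℝ :=
  if t ≤ 0 then 0 else
    Real.exp (-(s*x)) * Phi (s * Real.sqrt t - x / Real.sqrt t)
      + Real.exp (s*x) * Phi (-(s * Real.sqrt t + x / Real.sqrt t))

lemma Gfun_deriv (s x : ℝ) {t : ℝ} (ht : 0 < t) :
    HasDerivAt (Gfun s x)
      (Real.exp (-(s ^ 2 * t / 2)) * (x * Real.exp (-(x ^ 2 / (2 * t))) / Real.sqrt (2 * π * t ^ 3))) t := by
  obtain ⟨r, hr, rfl⟩ : ∃ r : ℝ, 0 < r ∧ t = r^2 :=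
    ⟨Real.sqrt t, Real.sqrt_pos.2 ht, (Real.sq_sqrt ht.le).symm⟩
  have hsq : Real.sqrt (r^2) = r := Real.sqrt_sq hr.le
  have h1 : HasDerivAt Real.sqrt (1/(2*r)) (r^2) := by
    have := Real.hasDerivAt_sqrt (show (r:ℝ)^2 ≠ 0 by positivity)
    rwa [hsq] at this
  have h2 : HasDerivAt (fun t => s * Real.sqrt t) (s * (1/(2*r))) (r^2) := h1.const_mul s
  have h3 : HasDerivAt (fun t => x / Real.sqrt t)
      ((0 * r - x * (1/(2*r))) / r^2) (r^2) := by
    have := (hasDerivAt_const (r^2) x).div h1 (by rw [hsq]; exact hr.ne')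
    rwa [hsq] at this
  have hA := h2.sub h3
  have hB := (h2.add h3).neg
  have hPA := (Phi_hasDerivAt (s * Real.sqrt (r^2) - x / Real.sqrt (r^2))).comp (r^2) hA
  have hPB := (Phi_hasDerivAt (-(s * Real.sqrt (r^2) + x / Real.sqrt (r^2)))).comp (r^2) hB
  have hF := (hPA.const_mul (Real.exp (-(s*x)))).add (hPB.const_mul (Real.exp (s*x)))
  have hev : Gfun s x =ᶠ[𝓝 (r^2)]
      (fun t => Real.exp (-(s*x)) * Phi (s * Real.sqrt t - x / Real.sqrt t)
        + Real.exp (s*x) * Phi (-(s * Real.sqrt t + x / Real.sqrt t))) := by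
    filter_upwards [Ioi_mem_nhds (show (0:ℝ) < r^2 by positivity)] with u hu
    rw [Gfun, if_neg (not_le.2 hu)]
  have hG := hF.congr_of_eventuallyEq hev
  convert hG using 1
  · rfl
  · rfl
  simp only [hsq, Function.comp]
  have e1 : Real.exp (-(1/2)*(s*r - x/r)^2)
      = Real.exp (s*x) * (Real.exp (-(s^2*(r^2)/2)) * Real.exp (-(x^2/(2*(r^2))))) := by
    rw [← Real.exp_add, ← Real.exp_add]
    congr 1
    field_simp
    ring
  have e2 : Real.exp (-(1/2)*(-(s*r + x/r))^2)
      = Real.exp (-(s*x)) * (Real.exp (-(s^2*(r^2)/2)) * Real.exp (-(x^2/(2*(r^2))))) := by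
    rw [← Real.exp_add, ← Real.exp_add]
    congr 1
    field_simp
    ring
  have e3 : Real.sqrt (2*π*(r^2)^3) = Real.sqrt (2*π) * (r^2*r) := by
    rw [show (2*π*(r^2)^3 : ℝ) = (2*π) * (r^2*r)^2 by ring,
      Real.sqrt_mul (by positivity), Real.sqrt_sq (by positivity)]
  rw [e1, e2, e3]
  simp only [Real.exp_neg]
  have hπ : (0:ℝ) < Real.sqrt (2*π) := Real.sqrt_pos.2 (by positivity)
  field_simp
  ring

lemma sqrt_tendsto_atTop : Tendsto Real.sqrt atTop atTop := by
  have := tendsto_rpow_atTop (show (0:ℝ) < 1/2 by norm_num)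
  exact this.congr fun b => (Real.sqrt_eq_rpow b).symm

lemma Gfun_tendsto_atTop (s x : ℝ) (hs : 0 < s) (hx : 0 < x) :
    Tendsto (Gfun s x) atTop (𝓝 (Real.exp (-(s*x)))) := by
  have hA : Tendsto (fun t : ℝ => s * Real.sqrt t - x / Real.sqrt t) atTop atTop := by
    have h1 : Tendsto (fun t : ℝ => s * Real.sqrt t) atTop atTop :=
      sqrt_tendsto_atTop.const_mul_atTop hs
    have h2 : Tendsto (fun t : ℝ => -(x / Real.sqrt t)) atTop (𝓝 (-0)) :=
      (tendsto_const_nhds.div_atTop sqrt_tendsto_atTop).neg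
    simpa [sub_eq_add_neg] using h1.atTop_add h2
  have hB : Tendsto (fun t : ℝ => -(s * Real.sqrt t + x / Real.sqrt t)) atTop atBot := by
    refine tendsto_neg_atTop_atBot.comp ?_
    exact (sqrt_tendsto_atTop.const_mul_atTop hs).atTop_add
      (tendsto_const_nhds.div_atTop sqrt_tendsto_atTop)
  have h := ((Phi_tendsto_atTop.comp hA).const_mul (Real.exp (-(s*x)))).add
    ((Phi_tendsto_atBot.comp hB).const_mul (Real.exp (s*x)))
  simp only [mul_one, mul_zero, add_zero] at h
  refine h.congr' ?_
  filter_upwards [eventually_gt_atTop (0:ℝ)] with t ht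
  rw [Gfun, if_neg (not_le.2 ht)]
  rfl

lemma Gfun_cont_zero (s x : ℝ) (hs : 0 < s) (hx : 0 < x) :
    ContinuousWithinAt (Gfun s x) (Ici 0) 0 := by
  have hG0 : Gfun s x 0 = 0 := by simp [Gfun]
  have hsq0 : Tendsto Real.sqrt (𝓝[Ioi (0:ℝ)] 0) (𝓝[Ioi (0:ℝ)] 0) := by
    rw [tendsto_nhdsWithin_iff]
    constructor
    · have := (Real.continuous_sqrt.tendsto 0).mono_left (nhdsWithin_le_nhds (s := Ioi (0:ℝ)))
      rwa [Real.sqrt_zero] at this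
    · filter_upwards [self_mem_nhdsWithin] with t ht
      exact Real.sqrt_pos.2 ht
  have hinv : Tendsto (fun t : ℝ => x / Real.sqrt t) (𝓝[Ioi (0:ℝ)] 0) atTop := by
    have := (tendsto_inv_nhdsGT_zero.comp hsq0).const_mul_atTop hx
    refine this.congr fun t => ?_
    simp [div_eq_mul_inv, Function.comp]
  have hm : Tendsto (fun t : ℝ => s * Real.sqrt t) (𝓝[Ioi (0:ℝ)] 0) (𝓝 (s * 0)) :=
    ((hsq0.mono_right nhdsWithin_le_nhds).const_mul s)
  have hA : Tendsto (fun t : ℝ => s * Real.sqrt t - x / Real.sqrt t) (𝓝[Ioi (0:ℝ)] 0) atBot := by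
    have h2 : Tendsto (fun t : ℝ => -(x / Real.sqrt t)) (𝓝[Ioi (0:ℝ)] 0) atBot :=
      tendsto_neg_atTop_atBot.comp hinv
    simpa [sub_eq_add_neg] using hm.add_atBot h2
  have hB : Tendsto (fun t : ℝ => -(s * Real.sqrt t + x / Real.sqrt t)) (𝓝[Ioi (0:ℝ)] 0) atBot :=
    tendsto_neg_atTop_atBot.comp (hm.add_atTop hinv)
  have ht0 : Tendsto (Gfun s x) (𝓝[Ioi (0:ℝ)] 0) (𝓝 0) := by
    have h := ((Phi_tendsto_atBot.comp hA).const_mul (Real.exp (-(s*x)))).add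
      ((Phi_tendsto_atBot.comp hB).const_mul (Real.exp (s*x)))
    simp only [mul_zero, add_zero] at h
    refine h.congr' ?_
    filter_upwards [self_mem_nhdsWithin] with t ht
    rw [Gfun, if_neg (not_le.2 ht)]
    rfl
  rw [ContinuousWithinAt, hG0,
    show Ici (0:ℝ) = {0} ∪ Ioi 0 by
      ext y; simp [le_iff_lt_or_eq, or_comm, eq_comm],
    nhdsWithin_union]
  rw [tendsto_sup]
  refine ⟨?_, ht0⟩
  rw [nhdsWithin_singleton]
  have := tendsto_pure_nhds (Gfun s x) 0
  rwa [hG0] at this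

theorem exp_as_subordinated (s x : ℝ) (hs : 0 < s) (hx : 0 < x) :
    Real.exp (-(s * x)) =
      ∫ t in Ioi (0 : ℝ),
        Real.exp (-(s ^ 2 * t / 2)) * (x * Real.exp (-(x ^ 2 / (2 * t))) / Real.sqrt (2 * π * t ^ 3)) := by
  have key := integral_Ioi_of_hasDerivAt_of_nonneg (a := 0) (g := Gfun s x)
    (g' := fun t => Real.exp (-(s ^ 2 * t / 2)) *
      (x * Real.exp (-(x ^ 2 / (2 * t))) / Real.sqrt (2 * π * t ^ 3)))
    (Gfun_cont_zero s x hs hx) (fun t ht => Gfun_deriv s x ht)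
    (fun t ht => by positivity) (Gfun_tendsto_atTop s x hs hx)
  rw [key, show Gfun s x 0 = 0 by simp [Gfun], sub_zero]
end

section
/- For α > 1 and s > 0, Σ_{n≥2} (Λ(n)/log n) n^{-α} (e^{-s log n} + s log n - 1) = ∫₀^∞ (1 - e^{-s²t/2}) ν^ζ_α(t)/t dt, where ν^ζ_α(t) = (1/√(2πt)) Σ_{n≥2} (Λ(n)/n^α)(1 - e^{-(log n)²/(2t)}). -/
open Real MeasureTheory Set ArithmeticFunction Function

lemma glasser_meas (c : ℝ) : Measurable (fun y : ℝ => Real.exp (-(y - c/y)^2)) :=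
  Real.measurable_exp.comp (((measurable_id.sub (measurable_const.div measurable_id)).pow_const 2).neg)

lemma gauss_int : Integrable (fun y : ℝ => Real.exp (-y^2)) := by
  simpa using (integrable_exp_neg_mul_sq one_pos)

lemma glasser_integrable_aux (c : ℝ) (hc : 0 < c) :
    IntegrableOn (fun y : ℝ => Real.exp (-(y - c/y)^2)) (Ioi 0) := by
  apply Integrable.mono' (g := fun y : ℝ => Real.exp (2*c) * Real.exp (-y^2))
  · exact (gauss_int.const_mul _).integrableOn
  · exact (glasser_meas c).aestronglyMeasurable.restrict
  · filter_upwards [ae_restrict_mem measurableSet_Ioi] with y hy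
    rw [Real.norm_eq_abs, abs_of_pos (Real.exp_pos _), ← Real.exp_add]
    apply Real.exp_le_exp.mpr
    have hy0 : y ≠ 0 := ne_of_gt hy
    have h1 : (y - c/y)^2 = y^2 + c^2/y^2 - 2*c := by field_simp; ring
    have h2 : 0 ≤ c^2/y^2 := by positivity
    rw [h1]; linarith

lemma glasser_integrable_aux2 (c : ℝ) (hc : 0 < c) :
    IntegrableOn (fun y : ℝ => c/y^2 * Real.exp (-(y - c/y)^2)) (Ioi 0) := by
  apply Integrable.mono' (g := fun y : ℝ => (Real.exp (2*c) * c⁻¹ * (Real.exp 1)⁻¹) * Real.exp (-y^2))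
  · exact (gauss_int.const_mul _).integrableOn
  · exact (((measurable_const.div (measurable_id.pow_const 2))).mul (glasser_meas c)).aestronglyMeasurable.restrict
  · filter_upwards [ae_restrict_mem measurableSet_Ioi] with y hy
    have hy0 : (0:ℝ) < y := hy
    rw [Real.norm_eq_abs, abs_of_pos (by positivity)]
    have h1 : (y - c/y)^2 = y^2 + c^2/y^2 - 2*c := by field_simp; ring
    rw [h1]
    set z := c^2/y^2 with hzdef
    have hz : (0:ℝ) < z := by positivity
    have h3 : z * Real.exp (-z) ≤ (Real.exp 1)⁻¹ := by
      have h := Real.add_one_le_exp (z - 1)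
      have h4 : z ≤ Real.exp (z-1) := by linarith
      calc z * Real.exp (-z) ≤ Real.exp (z-1) * Real.exp (-z) :=
            mul_le_mul_of_nonneg_right h4 (Real.exp_pos _).le
        _ = (Real.exp 1)⁻¹ := by rw [← Real.exp_add, ← Real.exp_neg]; ring_nf
    have key : c/y^2 * Real.exp (-z) ≤ c⁻¹ * (Real.exp 1)⁻¹ := by
      have h4 : c/y^2 = c⁻¹ * z := by rw [hzdef]; field_simp
      rw [h4, mul_assoc]
      exact mul_le_mul_of_nonneg_left h3 (by positivity)
    calc c/y^2 * Real.exp (-(y^2 + z - 2*c))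
        = (c/y^2 * Real.exp (-z)) * (Real.exp (2*c) * Real.exp (-y^2)) := by
          rw [mul_assoc, ← Real.exp_add, ← Real.exp_add]; congr 2; ring
      _ ≤ (c⁻¹ * (Real.exp 1)⁻¹) * (Real.exp (2*c) * Real.exp (-y^2)) :=
          mul_le_mul_of_nonneg_right key (by positivity)
      _ = Real.exp (2*c) * c⁻¹ * (Real.exp 1)⁻¹ * Real.exp (-y^2) := by ring

lemma phi_image (c : ℝ) (hc : 0 < c) :
    (fun y : ℝ => y - c/y) '' (Ioi 0) = univ := by
  apply eq_univ_of_forall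
  intro z
  have h1 : |z| < Real.sqrt (z^2 + 4*c) := by
    rw [← Real.sqrt_sq_eq_abs]
    exact Real.sqrt_lt_sqrt (sq_nonneg z) (by linarith)
  have h2 : Real.sqrt (z^2 + 4*c) ^ 2 = z^2 + 4*c := Real.sq_sqrt (by positivity)
  have habs := neg_abs_le z
  set y := (z + Real.sqrt (z^2 + 4*c))/2 with hy
  have hy0 : 0 < y := by rw [hy]; linarith
  refine ⟨y, hy0, ?_⟩
  have hyne : y ≠ 0 := ne_of_gt hy0
  have h3 : 2*y = z + Real.sqrt (z^2 + 4*c) := by rw [hy]; ring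
  show y - c/y = z
  field_simp
  have h4 := congrArg (fun t : ℝ => t*t) h3
  nlinarith [h2, h4]

lemma phi_deriv (c : ℝ) : ∀ y ∈ Ioi (0:ℝ),
    HasDerivWithinAt (fun y : ℝ => y - c/y) (1 + c/y^2) (Ioi 0) y := by
  intro y hy
  have hy0 : y ≠ 0 := ne_of_gt hy
  have h : HasDerivAt (fun x : ℝ => x - c * x⁻¹) (1 - c * -(y^2)⁻¹) y :=
    (hasDerivAt_id y).sub ((hasDerivAt_inv hy0).const_mul c)
  have h2 : (1:ℝ) + c/y^2 = 1 - c * -(y^2)⁻¹ := by field_simp; ring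
  rw [show (fun y:ℝ => y - c/y) = (fun x:ℝ => x - c*x⁻¹) from funext fun x => by rw [div_eq_mul_inv], h2]
  exact h.hasDerivWithinAt

lemma phi_inj (c : ℝ) (hc : 0 < c) : InjOn (fun y : ℝ => y - c/y) (Ioi 0) := by
  have : StrictMonoOn (fun y : ℝ => y - c/y) (Ioi 0) := by
    intro a ha b hb hab
    have ha0 : (0:ℝ) < a := ha
    have hb0 : (0:ℝ) < b := hb
    have : c/b < c/a := by
      apply div_lt_div_of_pos_left hc ha0 hab
    simp only []
    linarith
  exact this.injOn

lemma psi_image (c : ℝ) (hc : 0 < c) : (fun y : ℝ => c/y) '' (Ioi 0) = Ioi 0 := by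
  apply Subset.antisymm
  · rintro _ ⟨y, hy, rfl⟩
    exact div_pos hc hy
  · intro u hu
    exact ⟨c/u, div_pos hc hu, by field_simp⟩

lemma psi_deriv (c : ℝ) : ∀ y ∈ Ioi (0:ℝ),
    HasDerivWithinAt (fun y : ℝ => c/y) (-(c/y^2)) (Ioi 0) y := by
  intro y hy
  have hy0 : y ≠ 0 := ne_of_gt hy
  have h : HasDerivAt (fun x : ℝ => c * x⁻¹) (c * -(y^2)⁻¹) y :=
    (hasDerivAt_inv hy0).const_mul c
  have h2 : -(c/y^2) = c * -(y^2)⁻¹ := by field_simp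
  rw [show (fun y:ℝ => c/y) = (fun x:ℝ => c*x⁻¹) from funext fun x => by rw [div_eq_mul_inv], h2]
  exact h.hasDerivWithinAt

lemma psi_inj (c : ℝ) (hc : 0 < c) : InjOn (fun y : ℝ => c/y) (Ioi 0) := by
  intro a ha b hb hab
  have ha0 : (0:ℝ) < a := ha
  have hb0 : (0:ℝ) < b := hb
  have h2 : c/(c/a) = c/(c/b) := by simp only [] at hab; rw [hab]
  have e1 : c/(c/a) = a := by field_simp
  have e2 : c/(c/b) = b := by field_simp
  rwa [e1, e2] at h2

lemma glasser (c : ℝ) (hc : 0 ≤ c) :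
    ∫ y in Ioi (0:ℝ), Real.exp (-(y^2 + c^2/y^2)) = Real.sqrt π / 2 * Real.exp (-(2*c)) := by
  rcases eq_or_lt_of_le hc with rfl | hc
  · have h := integral_gaussian_Ioi 1
    simp only [neg_mul, one_mul, div_one] at h
    simp only [ne_eq, OfNat.ofNat_ne_zero, not_false_eq_true, zero_pow, zero_div, add_zero,
      mul_zero, neg_zero, Real.exp_zero, mul_one]
    exact h
  · -- main substitution
    have key := integral_image_eq_integral_abs_deriv_smul measurableSet_Ioi (phi_deriv c)
      (phi_inj c hc) (fun z => Real.exp (-z^2))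
    rw [phi_image c hc, Measure.restrict_univ] at key
    have hgauss : ∫ z : ℝ, Real.exp (-z^2) = Real.sqrt π := by
      have := integral_gaussian 1
      simpa using this
    rw [hgauss] at key
    -- rewrite RHS of key
    have key2 : Real.sqrt π = (∫ y in Ioi (0:ℝ), Real.exp (-(y - c/y)^2))
        + ∫ y in Ioi (0:ℝ), c/y^2 * Real.exp (-(y - c/y)^2) := by
      rw [key, ← integral_add (glasser_integrable_aux c hc) (glasser_integrable_aux2 c hc)]
      apply setIntegral_congr_fun measurableSet_Ioi
      intro y hy
      have hy0 : (0:ℝ) < y := hy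
      have : |1 + c/y^2| = 1 + c/y^2 := abs_of_pos (by positivity)
      simp only [smul_eq_mul, this]
      ring
    -- second substitution: the two integrals are equal
    have key3 : (∫ y in Ioi (0:ℝ), Real.exp (-(y - c/y)^2))
        = ∫ y in Ioi (0:ℝ), c/y^2 * Real.exp (-(y - c/y)^2) := by
      have h := integral_image_eq_integral_abs_deriv_smul measurableSet_Ioi (psi_deriv c)
        (psi_inj c hc) (fun u => Real.exp (-(u - c/u)^2))
      rw [psi_image c hc] at h
      rw [h]
      apply setIntegral_congr_fun measurableSet_Ioi
      intro y hy
      have hy0 : (0:ℝ) < y := hy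
      have h1 : |(-(c/y^2))| = c/y^2 := by rw [abs_neg]; exact abs_of_pos (by positivity)
      have h2 : c/(c/y) = y := by field_simp
      simp only [smul_eq_mul, h1, h2]
      congr 2
      ring
    have hval : (∫ y in Ioi (0:ℝ), Real.exp (-(y - c/y)^2)) = Real.sqrt π / 2 := by
      rw [key3] at key2; linarith [key2]
    calc ∫ y in Ioi (0:ℝ), Real.exp (-(y^2 + c^2/y^2))
        = ∫ y in Ioi (0:ℝ), Real.exp (-(2*c)) * Real.exp (-(y - c/y)^2) := by
          apply setIntegral_congr_fun measurableSet_Ioi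
          intro y hy
          have hy0 : y ≠ 0 := ne_of_gt hy
          show Real.exp (-(y^2 + c^2/y^2)) = Real.exp (-(2*c)) * Real.exp (-(y - c/y)^2)
          rw [← Real.exp_add]
          congr 1
          field_simp
          ring
      _ = Real.exp (-(2*c)) * (Real.sqrt π / 2) := by rw [MeasureTheory.integral_const_mul, hval]
      _ = Real.sqrt π / 2 * Real.exp (-(2*c)) := by ring

lemma sq_div_image (v : ℝ) (hv : 0 < v) : (fun y : ℝ => y^2/v) '' (Ioi 0) = Ioi 0 := by
  apply Subset.antisymm
  · rintro _ ⟨y, hy, rfl⟩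
    have hy0 : (0:ℝ) < y := hy
    exact div_pos (pow_pos hy0 2) hv
  · intro t ht
    have ht0 : (0:ℝ) < t := ht
    refine ⟨Real.sqrt (v*t), Real.sqrt_pos.mpr (by positivity), ?_⟩
    simp only []
    rw [Real.sq_sqrt (by positivity)]
    field_simp [mul_comm]

lemma sq_div_deriv (v : ℝ) : ∀ y ∈ Ioi (0:ℝ),
    HasDerivWithinAt (fun y : ℝ => y^2/v) (2*y/v) (Ioi 0) y := by
  intro y hy
  exact (((hasDerivAt_pow 2 y).div_const v).congr_deriv (by push_cast; ring)).hasDerivWithinAt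

lemma sq_div_inj (v : ℝ) (hv : 0 < v) : InjOn (fun y : ℝ => y^2/v) (Ioi 0) := by
  intro a ha b hb hab
  simp only [div_eq_div_iff (ne_of_gt hv) (ne_of_gt hv)] at hab
  have ha0 : (0:ℝ) < a := ha
  have hb0 : (0:ℝ) < b := hb
  nlinarith [mul_right_cancel₀ (ne_of_gt hv) hab]

lemma subst_pointwise (b v y : ℝ) (hb : 0 ≤ b) (hv : 0 < v) (hy : 0 < y) :
    |2*y/v| • (Real.exp (-(v*(y^2/v) + b/(y^2/v))) / Real.sqrt (y^2/v))
      = 2/Real.sqrt v * Real.exp (-(y^2 + (Real.sqrt (b*v))^2/y^2)) := by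
  have hv' : Real.sqrt v > 0 := Real.sqrt_pos.mpr hv
  have h1 : Real.sqrt (y^2/v) = y / Real.sqrt v := by
    rw [Real.sqrt_div (sq_nonneg y), Real.sqrt_sq hy.le]
  have e1 : v*(y^2/v) + b/(y^2/v) = y^2 + (Real.sqrt (b*v))^2/y^2 := by
    rw [Real.sq_sqrt (mul_nonneg hb hv.le)]
    field_simp
  rw [smul_eq_mul, abs_of_pos (by positivity), h1, e1]
  field_simp
  ring_nf
  rw [Real.sq_sqrt hv.le]


lemma exp_sum_meas (w : ℝ) : Measurable (fun y : ℝ => Real.exp (-(y^2 + w/y^2))) :=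
  Real.measurable_exp.comp (((measurable_id.pow_const 2).add
    (measurable_const.div (measurable_id.pow_const 2))).neg)

lemma gauss_int' : Integrable (fun y : ℝ => Real.exp (-y^2)) := by
  simpa using (integrable_exp_neg_mul_sq one_pos)

lemma exp_sum_integrable (w : ℝ) (hw : 0 ≤ w) :
    IntegrableOn (fun y : ℝ => Real.exp (-(y^2 + w/y^2))) (Ioi 0) := by
  apply Integrable.mono' (g := fun y : ℝ => Real.exp (-y^2)) gauss_int'.integrableOn
    (exp_sum_meas w).aestronglyMeasurable.restrict
  filter_upwards [ae_restrict_mem measurableSet_Ioi] with y hy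
  have hy0 : (0:ℝ) < y := hy
  rw [Real.norm_eq_abs, abs_of_pos (Real.exp_pos _)]
  apply Real.exp_le_exp.mpr
  have : 0 ≤ w/y^2 := by positivity
  linarith

lemma L2int (b v : ℝ) (hb : 0 ≤ b) (hv : 0 < v) :
    IntegrableOn (fun t : ℝ => Real.exp (-(v*t + b/t)) / Real.sqrt t) (Ioi 0) := by
  rw [← sq_div_image v hv,
    integrableOn_image_iff_integrableOn_abs_deriv_smul measurableSet_Ioi
      (sq_div_deriv v) (sq_div_inj v hv)]
  apply IntegrableOn.congr_fun
    ((exp_sum_integrable ((Real.sqrt (b*v))^2) (by positivity)).const_mul (2/Real.sqrt v))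
  · intro y hy
    exact (subst_pointwise b v y hb hv hy).symm
  · exact measurableSet_Ioi

lemma L2val (b v : ℝ) (hb : 0 ≤ b) (hv : 0 < v) :
    ∫ t in Ioi (0:ℝ), Real.exp (-(v*t + b/t)) / Real.sqrt t
      = Real.sqrt (π/v) * Real.exp (-(2*Real.sqrt (b*v))) := by
  rw [← sq_div_image v hv,
    integral_image_eq_integral_abs_deriv_smul measurableSet_Ioi
      (sq_div_deriv v) (sq_div_inj v hv)]
  rw [setIntegral_congr_fun measurableSet_Ioi
    (fun y hy => subst_pointwise b v y hb hv hy)]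
  rw [MeasureTheory.integral_const_mul, glasser (Real.sqrt (b*v)) (Real.sqrt_nonneg _),
    Real.sqrt_div pi_pos.le]
  have hv' : Real.sqrt v > 0 := Real.sqrt_pos.mpr hv
  field_simp

lemma L3_ptwise (a v t : ℝ) (ht : 0 < t) :
    Real.exp (-(v*t)) * (1 - Real.exp (-(a/t))) / Real.sqrt t
      = Real.exp (-(v*t + 0/t)) / Real.sqrt t - Real.exp (-(v*t + a/t)) / Real.sqrt t := by
  rw [zero_div, add_zero, ← sub_div]
  congr 1
  rw [neg_add, Real.exp_add]
  ring

lemma L3int (a v : ℝ) (ha : 0 ≤ a) (hv : 0 < v) :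
    IntegrableOn (fun t : ℝ => Real.exp (-(v*t)) * (1 - Real.exp (-(a/t))) / Real.sqrt t) (Ioi 0) := by
  apply IntegrableOn.congr_fun ((L2int 0 v le_rfl hv).sub (L2int a v ha hv))
    (fun t ht => (L3_ptwise a v t ht).symm) measurableSet_Ioi

lemma L3val (a v : ℝ) (ha : 0 ≤ a) (hv : 0 < v) :
    ∫ t in Ioi (0:ℝ), Real.exp (-(v*t)) * (1 - Real.exp (-(a/t))) / Real.sqrt t
      = Real.sqrt (π/v) * (1 - Real.exp (-(2*Real.sqrt (a*v)))) := by
  rw [setIntegral_congr_fun measurableSet_Ioi (fun t ht => L3_ptwise a v t ht),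
    integral_sub (L2int 0 v le_rfl hv) (L2int a v ha hv), L2val 0 v le_rfl hv, L2val a v ha hv]
  simp only [zero_mul, Real.sqrt_zero, mul_zero, neg_zero, Real.exp_zero, mul_one]
  ring

lemma inv_sqrt_integrable (lam : ℝ) (hl : 0 < lam) :
    IntegrableOn (fun v : ℝ => Real.sqrt π / Real.sqrt v) (Ioo 0 lam) := by
  have h : IntegrableOn (fun v : ℝ => v ^ (-(1/2) : ℝ)) (Ioo 0 lam) := by
    have := intervalIntegral.intervalIntegrable_rpow' (a := 0) (b := lam) (r := -(1/2)) (by norm_num)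
    rwa [intervalIntegrable_iff_integrableOn_Ioo_of_le hl.le] at this
  apply IntegrableOn.congr_fun (h.const_mul (Real.sqrt π)) _ measurableSet_Ioo
  intro v hv
  show Real.sqrt π * v ^ (-(1/2):ℝ) = Real.sqrt π / Real.sqrt v
  rw [Real.rpow_neg hv.1.le, ← Real.sqrt_eq_rpow, div_eq_mul_inv]

lemma exp_Ioo_integral (lam t : ℝ) (hl : 0 < lam) (ht : 0 < t) :
    ∫ v in Ioo (0:ℝ) lam, Real.exp (-(v*t)) = (1 - Real.exp (-(lam*t)))/t := by
  rw [← integral_Ioc_eq_integral_Ioo, ← intervalIntegral.integral_of_le hl.le]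
  have hF : ∀ v : ℝ, HasDerivAt (fun v : ℝ => -Real.exp (-(v*t))/t) (Real.exp (-(v*t))) v := by
    intro v
    have h1 : HasDerivAt (fun v : ℝ => -(v*t)) (-t) v := by
      simpa using ((hasDerivAt_id v).mul_const t).fun_neg
    have h2 := (Real.hasDerivAt_exp (-(v*t))).comp v h1
    have h3 := (h2.div_const t).neg
    convert h3 using 1
    · rfl
    · rfl
    · funext x; simp [Function.comp, neg_div]
    · rw [mul_neg, neg_div, neg_neg, mul_div_assoc, div_self (ne_of_gt ht), mul_one]
  rw [intervalIntegral.integral_eq_sub_of_hasDerivAt (fun v _ => hF v)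
    ((Real.continuous_exp.comp (by fun_prop)).intervalIntegrable 0 lam)]
  simp [neg_div, Real.exp_zero]
  field_simp
  ring

noncomputable def ff (a : ℝ) : ℝ → ℝ → ℝ :=
  fun t v => Real.exp (-(v*t)) * (1 - Real.exp (-(a/t))) / Real.sqrt t

lemma ff_meas (a : ℝ) : Measurable (uncurry (ff a)) :=
  ((Real.measurable_exp.comp (measurable_snd.mul measurable_fst).neg).mul
    (measurable_const.sub (Real.measurable_exp.comp (measurable_const.div measurable_fst).neg))).div
    (Real.continuous_sqrt.measurable.comp measurable_fst)

lemma ff_nonneg (a : ℝ) (ha : 0 < a) {t : ℝ} (ht : 0 < t) (v : ℝ) : 0 ≤ ff a t v := by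
  unfold ff
  have h1 : Real.exp (-(a/t)) ≤ 1 := Real.exp_le_one_iff.mpr (neg_nonpos.mpr (by positivity))
  apply div_nonneg (mul_nonneg (Real.exp_pos _).le (by linarith)) (Real.sqrt_nonneg t)

lemma ff_int_norm_bound (a lam : ℝ) (ha : 0 < a) (hl : 0 < lam) {v : ℝ} (hv : 0 < v) :
    ∫ t in Ioi (0:ℝ), ‖ff a t v‖ = Real.sqrt (π/v) * (1 - Real.exp (-(2*Real.sqrt (a*v)))) := by
  rw [setIntegral_congr_fun measurableSet_Ioi
    (fun t ht => Real.norm_of_nonneg (ff_nonneg a ha ht v))]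
  exact L3val a v ha.le hv

lemma ff_prod_int (a lam : ℝ) (ha : 0 < a) (hl : 0 < lam) :
    Integrable (uncurry (ff a))
      ((volume.restrict (Ioi 0)).prod (volume.restrict (Ioo 0 lam))) := by
  rw [integrable_prod_iff' (ff_meas a).aestronglyMeasurable]
  constructor
  · filter_upwards [ae_restrict_mem measurableSet_Ioo] with v hv
    exact L3int a v ha.le hv.1
  · apply Integrable.mono' (inv_sqrt_integrable lam hl)
    · have hm : Measurable (fun q : ℝ × ℝ => ‖uncurry (ff a) (q.2, q.1)‖) :=
        ((ff_meas a).comp measurable_swap).norm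
      exact hm.aestronglyMeasurable.integral_prod_right'
    · filter_upwards [ae_restrict_mem measurableSet_Ioo] with v hv
      have h0 : (0:ℝ) < v := hv.1
      rw [Real.norm_of_nonneg (integral_nonneg (fun t => norm_nonneg _))]
      show (∫ t in Ioi (0:ℝ), ‖ff a t v‖) ≤ Real.sqrt π / Real.sqrt v
      rw [ff_int_norm_bound a lam ha hl h0, Real.sqrt_div pi_pos.le]
      have h1 : Real.exp (-(2*Real.sqrt (a*v))) ≥ 0 := (Real.exp_pos _).le
      have h2 : (0:ℝ) ≤ Real.sqrt π / Real.sqrt v := by positivity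
      nlinarith

lemma G_deriv (a : ℝ) (ha : 0 < a) (v : ℝ) (hv : 0 < v) :
    HasDerivAt (fun v : ℝ => 2*Real.sqrt π * Real.sqrt v
        - Real.sqrt (π/a) * (1 - Real.exp (-(2*Real.sqrt a*Real.sqrt v))))
      (Real.sqrt (π/v) * (1 - Real.exp (-(2*Real.sqrt (a*v))))) v := by
  have hv' : Real.sqrt v > 0 := Real.sqrt_pos.mpr hv
  have ha' : Real.sqrt a > 0 := Real.sqrt_pos.mpr ha
  have hs := Real.hasDerivAt_sqrt (ne_of_gt hv)
  have h1 := hs.const_mul (2*Real.sqrt π)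
  have h2 := (hs.const_mul (2*Real.sqrt a)).fun_neg
  have h3 := (Real.hasDerivAt_exp _).comp v h2
  have h4 := ((h3.const_sub 1).const_mul (Real.sqrt (π/a)))
  have h5 := h1.sub h4
  convert h5 using 1
  · rfl
  · rfl
  · rfl
  have e1 : Real.sqrt (a*v) = Real.sqrt a * Real.sqrt v := Real.sqrt_mul ha.le v
  have e2 : Real.sqrt (π/v) = Real.sqrt π / Real.sqrt v := Real.sqrt_div pi_pos.le v
  have e3 : Real.sqrt (π/a) = Real.sqrt π / Real.sqrt a := Real.sqrt_div pi_pos.le a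
  rw [e1, e2, e3]
  field_simp

lemma G_cont (a : ℝ) : Continuous (fun v : ℝ => 2*Real.sqrt π * Real.sqrt v
    - Real.sqrt (π/a) * (1 - Real.exp (-(2*Real.sqrt a*Real.sqrt v)))) := by
  have h := Real.continuous_sqrt
  fun_prop

lemma gp_meas (a : ℝ) : Measurable (fun v : ℝ =>
    Real.sqrt (π/v) * (1 - Real.exp (-(2*Real.sqrt (a*v))))) :=
  (Real.continuous_sqrt.measurable.comp (measurable_const.div measurable_id)).mul
    (measurable_const.sub (Real.measurable_exp.comp
      ((measurable_const.mul (Real.continuous_sqrt.measurable.comp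
        (measurable_const.mul measurable_id))).neg)))

lemma gp_int (a lam : ℝ) (ha : 0 < a) (hl : 0 < lam) :
    IntegrableOn (fun v : ℝ => Real.sqrt (π/v) * (1 - Real.exp (-(2*Real.sqrt (a*v)))))
      (Ioo 0 lam) := by
  apply Integrable.mono' (inv_sqrt_integrable lam hl)
    (gp_meas a).aestronglyMeasurable.restrict
  filter_upwards [ae_restrict_mem measurableSet_Ioo] with v hv
  have h0 : (0:ℝ) < v := hv.1
  have h1 : Real.exp (-(2*Real.sqrt (a*v))) ≥ 0 := (Real.exp_pos _).le
  have h1' : Real.exp (-(2*Real.sqrt (a*v))) ≤ 1 := Real.exp_le_one_iff.mpr (neg_nonpos.mpr (by positivity))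
  rw [Real.norm_of_nonneg (mul_nonneg (Real.sqrt_nonneg _) (by linarith)), Real.sqrt_div pi_pos.le]
  have h2 : (0:ℝ) ≤ Real.sqrt π / Real.sqrt v := by positivity
  nlinarith

lemma L4lam (a lam : ℝ) (ha : 0 < a) (hl : 0 < lam) :
    ∫ v in Ioo (0:ℝ) lam, Real.sqrt (π/v) * (1 - Real.exp (-(2*Real.sqrt (a*v))))
      = 2*Real.sqrt π * Real.sqrt lam
        - Real.sqrt (π/a) * (1 - Real.exp (-(2*Real.sqrt (a*lam)))) := by
  have hint : IntervalIntegrable (fun v : ℝ =>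
      Real.sqrt (π/v) * (1 - Real.exp (-(2*Real.sqrt (a*v))))) volume 0 lam := by
    rw [intervalIntegrable_iff_integrableOn_Ioo_of_le hl.le]
    exact gp_int a lam ha hl
  have key := intervalIntegral.integral_eq_sub_of_hasDeriv_right_of_le hl.le
    (Continuous.continuousOn (G_cont a))
    (fun x hx => (G_deriv a ha x hx.1).hasDerivWithinAt) hint
  rw [intervalIntegral.integral_of_le hl.le, integral_Ioc_eq_integral_Ioo] at key
  rw [key, Real.sqrt_zero, mul_zero, mul_zero, neg_zero, Real.exp_zero, sub_self, mul_zero,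
    sub_zero, Real.sqrt_mul ha.le]
  ring

lemma L4int (a lam : ℝ) (ha : 0 < a) (hl : 0 < lam) :
    IntegrableOn (fun t : ℝ => (1 - Real.exp (-(lam*t))) * (1 - Real.exp (-(a/t)))
      / (t * Real.sqrt t)) (Ioi 0) := by
  apply IntegrableOn.congr_fun ((ff_prod_int a lam ha hl).integral_prod_left) _ measurableSet_Ioi
  intro t ht
  have ht0 : (0:ℝ) < t := ht
  show (∫ v in Ioo (0:ℝ) lam, ff a t v) = _
  unfold ff
  calc (∫ v in Ioo (0:ℝ) lam, Real.exp (-(v*t)) * (1 - Real.exp (-(a/t))) / Real.sqrt t)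
      = (∫ v in Ioo (0:ℝ) lam, Real.exp (-(v*t))) * ((1 - Real.exp (-(a/t))) / Real.sqrt t) := by
        rw [← MeasureTheory.integral_mul_const]
        congr 1; funext v; rw [mul_div_assoc]
    _ = ((1 - Real.exp (-(lam*t)))/t) * ((1 - Real.exp (-(a/t))) / Real.sqrt t) := by
        rw [exp_Ioo_integral lam t hl ht0]
    _ = (1 - Real.exp (-(lam*t))) * (1 - Real.exp (-(a/t))) / (t * Real.sqrt t) := by
        rw [div_mul_div_comm]

lemma L4val (a lam : ℝ) (ha : 0 < a) (hl : 0 < lam) :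
    ∫ t in Ioi (0:ℝ), (1 - Real.exp (-(lam*t))) * (1 - Real.exp (-(a/t))) / (t * Real.sqrt t)
      = 2*Real.sqrt π * Real.sqrt lam
        - Real.sqrt (π/a) * (1 - Real.exp (-(2*Real.sqrt (a*lam)))) := by
  have hswap := integral_integral_swap (f := ff a) (ff_prod_int a lam ha hl)
  have lhs_eq : ∫ t in Ioi (0:ℝ), (1 - Real.exp (-(lam*t))) * (1 - Real.exp (-(a/t)))
      / (t * Real.sqrt t) = ∫ t in Ioi (0:ℝ), ∫ v in Ioo (0:ℝ) lam, ff a t v := by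
    apply setIntegral_congr_fun measurableSet_Ioi
    intro t ht
    have ht0 : (0:ℝ) < t := ht
    show _ = (∫ v in Ioo (0:ℝ) lam, ff a t v)
    unfold ff
    rw [show (fun v => Real.exp (-(v*t)) * (1 - Real.exp (-(a/t))) / Real.sqrt t)
      = (fun v => Real.exp (-(v*t)) * ((1 - Real.exp (-(a/t))) / Real.sqrt t))
      from funext fun v => by rw [mul_div_assoc]]
    rw [MeasureTheory.integral_mul_const, exp_Ioo_integral lam t hl ht0, div_mul_div_comm]
  rw [lhs_eq, hswap]
  have heq : EqOn (fun v : ℝ => ∫ t in Ioi (0:ℝ), ff a t v)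
      (fun v : ℝ => Real.sqrt (π/v) * (1 - Real.exp (-(2*Real.sqrt (a*v))))) (Ioo 0 lam) := by
    intro v hv
    show (∫ t in Ioi (0:ℝ), ff a t v) = _
    unfold ff
    exact L3val a v ha.le hv.1
  exact (setIntegral_congr_fun measurableSet_Ioo heq).trans (L4lam a lam ha hl)

lemma L5_ptwise (s x t : ℝ) (ht : 0 < t) :
    (1 - Real.exp (-(s^2*t/2))) * (1/Real.sqrt (2*π*t)) / t * (1 - Real.exp (-x^2/(2*t)))
      = (1/Real.sqrt (2*π)) * ((1 - Real.exp (-(s^2/2*t))) * (1 - Real.exp (-(x^2/2/t)))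
        / (t * Real.sqrt t)) := by
  have h1 : Real.sqrt (2*π*t) = Real.sqrt (2*π) * Real.sqrt t := Real.sqrt_mul (by positivity) t
  have h2 : -(s^2*t/2) = -(s^2/2*t) := by ring
  have h3 : -x^2/(2*t) = -(x^2/2/t) := by field_simp
  have ht' : Real.sqrt t > 0 := Real.sqrt_pos.mpr ht
  have h2π : Real.sqrt (2*π) > 0 := Real.sqrt_pos.mpr (by positivity)
  rw [h1, h2, h3, one_div, mul_inv]
  ring

lemma L5int (s x : ℝ) (hs : 0 < s) (hx : 0 < x) :
    IntegrableOn (fun t : ℝ =>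
      (1 - Real.exp (-(s^2*t/2))) * (1/Real.sqrt (2*π*t)) / t * (1 - Real.exp (-x^2/(2*t))))
      (Ioi 0) := by
  apply IntegrableOn.congr_fun
    (((L4int (x^2/2) (s^2/2) (by positivity) (by positivity)).const_mul (1/Real.sqrt (2*π))))
    _ measurableSet_Ioi
  intro t ht
  exact (L5_ptwise s x t ht).symm

lemma L5val (s x : ℝ) (hs : 0 < s) (hx : 0 < x) :
    ∫ t in Ioi (0:ℝ),
      (1 - Real.exp (-(s^2*t/2))) * (1/Real.sqrt (2*π*t)) / t * (1 - Real.exp (-x^2/(2*t)))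
      = (Real.exp (-(s*x)) + s*x - 1)/x := by
  rw [setIntegral_congr_fun measurableSet_Ioi (fun t ht => L5_ptwise s x t ht),
    MeasureTheory.integral_const_mul, L4val (x^2/2) (s^2/2) (by positivity) (by positivity)]
  have e1 : Real.sqrt (s^2/2) = s/Real.sqrt 2 := by
    rw [Real.sqrt_div (sq_nonneg s), Real.sqrt_sq hs.le]
  have e2 : Real.sqrt (x^2/2 * (s^2/2)) = x*s/2 := by
    rw [show x^2/2*(s^2/2) = (x*s/2)^2 by ring, Real.sqrt_sq (by positivity)]
  have e3 : Real.sqrt (π/(x^2/2)) = Real.sqrt π * Real.sqrt 2 / x := by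
    rw [Real.sqrt_div pi_pos.le, Real.sqrt_div (sq_nonneg x), Real.sqrt_sq hx.le]
    field_simp
  have e4 : Real.sqrt (2*π) = Real.sqrt 2 * Real.sqrt π := Real.sqrt_mul (by norm_num) π
  have h2 : Real.sqrt 2 > 0 := Real.sqrt_pos.mpr (by norm_num)
  have hπ : Real.sqrt π > 0 := Real.sqrt_pos.mpr pi_pos
  have h2sq : Real.sqrt 2 * Real.sqrt 2 = 2 := Real.mul_self_sqrt (by norm_num)
  rw [e1, e2, e3, e4, show 2*(x*s/2) = s*x by ring]
  field_simp
  ring_nf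
  rw [Real.sq_sqrt (by norm_num : (0:ℝ) ≤ 2)]

lemma log_div_rpow_summable (α : ℝ) (hα : 1 < α) :
    Summable (fun n : ℕ => Real.log n / (n:ℝ)^α) := by
  set β := (1+α)/2 with hβdef
  have hβ : 1 < β := by rw [hβdef]; linarith
  have hε : 0 < α - β := by rw [hβdef]; linarith
  refine Summable.of_nonneg_of_le (fun n => ?_) (fun n => ?_)
    ((Real.summable_nat_rpow_inv.mpr hβ).mul_left ((α-β)⁻¹))
  · 
    exact div_nonneg (Real.log_natCast_nonneg n) (Real.rpow_nonneg n.cast_nonneg α)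
  · rcases Nat.eq_zero_or_pos n with rfl | hn
    · simp [Real.zero_rpow (by linarith : α ≠ 0), Real.zero_rpow (by linarith : β ≠ 0)]
    · have hn0 : (0:ℝ) < n := Nat.cast_pos.mpr hn
      have hlog : Real.log n ≤ (α-β)⁻¹ * (n:ℝ)^(α-β) := by
        have h1 : Real.log ((n:ℝ)^(α-β)) = (α-β) * Real.log n := Real.log_rpow hn0 _
        have h2 : Real.log ((n:ℝ)^(α-β)) ≤ (n:ℝ)^(α-β) := by
          have := Real.log_le_sub_one_of_pos (x := (n:ℝ)^(α-β)) (by positivity)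
          linarith
        calc Real.log n = (α-β)⁻¹ * ((α-β) * Real.log n) := by field_simp
          _ = (α-β)⁻¹ * Real.log ((n:ℝ)^(α-β)) := by rw [h1]
          _ ≤ (α-β)⁻¹ * (n:ℝ)^(α-β) := by gcongr
      calc Real.log n / (n:ℝ)^α ≤ ((α-β)⁻¹ * (n:ℝ)^(α-β)) / (n:ℝ)^α :=
            (div_le_div_iff_of_pos_right (by positivity)).mpr hlog
        _ = (α-β)⁻¹ * ((n:ℝ)^β)⁻¹ := by
            rw [Real.rpow_sub hn0]
            have hα0 : (n:ℝ)^α ≠ 0 := ne_of_gt (by positivity)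
            have hβ0 : (n:ℝ)^β ≠ 0 := ne_of_gt (by positivity)
            field_simp

lemma vonMangoldt_div_rpow_summable (α : ℝ) (hα : 1 < α) :
    Summable (fun n : ℕ => Λ n / (n:ℝ)^α) := by
  refine Summable.of_nonneg_of_le (fun n => ?_) (fun n => ?_) (log_div_rpow_summable α hα)
  · exact div_nonneg vonMangoldt_nonneg (Real.rpow_nonneg n.cast_nonneg α)
  · rcases eq_or_ne ((n:ℝ)^α) 0 with h | h
    · rw [h, div_zero, div_zero]
    · have hpos : (0:ℝ) < (n:ℝ)^α := lt_of_le_of_ne (Real.rpow_nonneg n.cast_nonneg α) (Ne.symm h)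
      exact (div_le_div_iff_of_pos_right hpos).mpr vonMangoldt_le_log

theorem zeta_exponent_as_levy_integral (α s : ℝ) (hα : 1 < α) (hs : 0 < s) :
    ∑' n : ℕ, Λ n / Real.log n * (n : ℝ) ^ (-α) *
        (Real.exp (-(s * Real.log n)) + s * Real.log n - 1) =
      ∫ t in Ioi (0 : ℝ),
        (1 - Real.exp (-(s ^ 2 * t / 2))) *
          ((1 / Real.sqrt (2 * π * t)) *
            ∑' n : ℕ, Λ n / (n : ℝ) ^ α * (1 - Real.exp (-(Real.log n) ^ 2 / (2 * t)))) / t := by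
  set F : ℕ → ℝ → ℝ := fun n t =>
    (1 - Real.exp (-(s^2*t/2))) * (1/Real.sqrt (2*π*t)) / t *
      (Λ n / (n:ℝ)^α * (1 - Real.exp (-(Real.log n)^2/(2*t)))) with hF
  -- basic facts for n with Λ n ≠ 0
  have hx : ∀ n : ℕ, Λ n ≠ 0 → 0 < Real.log n := by
    intro n hn
    have h2 : 2 ≤ n := (vonMangoldt_ne_zero_iff.mp hn).two_le
    exact Real.log_pos (by exact_mod_cast Nat.lt_of_lt_of_le Nat.one_lt_two h2)
  -- per-n evaluation
  have key : ∀ n : ℕ, Λ n / Real.log n * (n : ℝ) ^ (-α) *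
      (Real.exp (-(s * Real.log n)) + s * Real.log n - 1) = ∫ t in Ioi (0:ℝ), F n t := by
    intro n
    by_cases hn : Λ n = 0
    · have hF0 : F n = fun _ => (0:ℝ) := by
        funext t; rw [hF]; simp [hn]
      rw [hF0]
      simp [hn]
    · have hxn := hx n hn
      have hFn : F n = fun t => (Λ n / (n:ℝ)^α) *
          ((1 - Real.exp (-(s^2*t/2))) * (1/Real.sqrt (2*π*t)) / t *
            (1 - Real.exp (-(Real.log n)^2/(2*t)))) := by
        funext t; rw [hF]; ring
      rw [hFn, MeasureTheory.integral_const_mul, L5val s (Real.log n) hs hxn]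
      rw [Real.rpow_neg n.cast_nonneg]
      rw [div_eq_mul_inv, div_eq_mul_inv, div_eq_mul_inv]
      ring
  -- integrability
  have hFint : ∀ n : ℕ, Integrable (F n) (volume.restrict (Ioi 0)) := by
    intro n
    by_cases hn : Λ n = 0
    · have hF0 : F n = fun _ => (0:ℝ) := by funext t; rw [hF]; simp [hn]
      rw [hF0]; exact integrable_zero _ _ _
    · have hxn := hx n hn
      have hFn : F n = fun t => (Λ n / (n:ℝ)^α) *
          ((1 - Real.exp (-(s^2*t/2))) * (1/Real.sqrt (2*π*t)) / t *
            (1 - Real.exp (-(Real.log n)^2/(2*t)))) := by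
        funext t; rw [hF]; ring
      rw [hFn]
      exact (L5int s (Real.log n) hs hxn).const_mul _
  -- nonnegativity of F n t for t > 0
  have hFnonneg : ∀ n : ℕ, ∀ t ∈ Ioi (0:ℝ), 0 ≤ F n t := by
    intro n t ht
    have ht0 : (0:ℝ) < t := ht
    rw [hF]
    have h1 : Real.exp (-(s^2*t/2)) ≤ 1 := Real.exp_le_one_iff.mpr (neg_nonpos.mpr (by positivity))
    have h2 : Real.exp (-(Real.log n)^2/(2*t)) ≤ 1 := by
      apply Real.exp_le_one_iff.mpr
      apply div_nonpos_of_nonpos_of_nonneg (neg_nonpos.mpr (sq_nonneg _)) (by positivity)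
    have h3 : (0:ℝ) ≤ Λ n := vonMangoldt_nonneg
    have h4 : (0:ℝ) ≤ (n:ℝ)^α := Real.rpow_nonneg n.cast_nonneg α
    have h5 : (0:ℝ) ≤ 1/Real.sqrt (2*π*t) := by positivity
    apply mul_nonneg (div_nonneg (mul_nonneg (by linarith) h5) ht0.le)
    exact mul_nonneg (div_nonneg h3 h4) (by linarith)
  -- summability of ∫ ‖F n‖
  have hnorm : ∀ n : ℕ, (∫ t in Ioi (0:ℝ), ‖F n t‖) = ∫ t in Ioi (0:ℝ), F n t := by
    intro n
    exact setIntegral_congr_fun measurableSet_Ioi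
      (fun t ht => Real.norm_of_nonneg (hFnonneg n t ht))
  have hsum : Summable (fun n : ℕ => ∫ t in Ioi (0:ℝ), ‖F n t‖) := by
    refine Summable.of_nonneg_of_le
      (fun n => integral_nonneg (fun t => norm_nonneg _))
      (fun n => ?_) ((vonMangoldt_div_rpow_summable α hα).mul_left s)
    rw [hnorm n, ← key n]
    by_cases hn : Λ n = 0
    · rw [hn]
      simp only [zero_div, zero_mul]
      positivity
    · have hxn := hx n hn
      have hQ : Real.exp (-(s * Real.log n)) + s * Real.log n - 1 ≤ s * Real.log n := by
        have := Real.exp_le_one_iff.mpr (neg_nonpos.mpr (by positivity : 0 ≤ s * Real.log n))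
        linarith
      have h3 : (0:ℝ) ≤ Λ n := vonMangoldt_nonneg
      rw [Real.rpow_neg n.cast_nonneg]
      calc Λ n / Real.log n * ((n:ℝ)^α)⁻¹ * (Real.exp (-(s * Real.log n)) + s * Real.log n - 1)
          ≤ Λ n / Real.log n * ((n:ℝ)^α)⁻¹ * (s * Real.log n) := by
            apply mul_le_mul_of_nonneg_left hQ (by positivity)
        _ = s * (Λ n / (n:ℝ)^α) := by
            rw [div_eq_mul_inv (Λ n) (Real.log (n:ℝ)), div_eq_mul_inv (Λ n) ((n:ℝ)^α),
              show Λ n * (Real.log (n:ℝ))⁻¹ * ((n:ℝ)^α)⁻¹ * (s * Real.log (n:ℝ))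
                = (Real.log (n:ℝ) * (Real.log (n:ℝ))⁻¹) * (s * (Λ n * ((n:ℝ)^α)⁻¹)) from by ring,
              mul_inv_cancel₀ (ne_of_gt hxn), one_mul]
  -- swap sum and integral
  have hswap := MeasureTheory.integral_tsum_of_summable_integral_norm hFint hsum
  calc ∑' n : ℕ, Λ n / Real.log n * (n : ℝ) ^ (-α) *
        (Real.exp (-(s * Real.log n)) + s * Real.log n - 1)
      = ∑' n : ℕ, ∫ t in Ioi (0:ℝ), F n t := tsum_congr key
    _ = ∫ t in Ioi (0:ℝ), ∑' n : ℕ, F n t := hswap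
    _ = ∫ t in Ioi (0 : ℝ),
        (1 - Real.exp (-(s ^ 2 * t / 2))) *
          ((1 / Real.sqrt (2 * π * t)) *
            ∑' n : ℕ, Λ n / (n : ℝ) ^ α * (1 - Real.exp (-(Real.log n) ^ 2 / (2 * t)))) / t := by
        apply integral_congr_ae
        filter_upwards with t
        rw [hF]
        rw [tsum_mul_left]
        ring
end

section
/- For every x > 0 and t > 0, (1/√(2πt)) (1 - e^{-x²/(2t)}) = (1/√(2π)) ∫₀^∞ e^{-tz} · 2 sin²(x √(z/2)) / √(πz) dz. -/
open Real MeasureTheory Set Complex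

lemma cos_gaussian_integral (t a : ℝ) (ht : 0 < t) :
    ∫ u : ℝ, Real.exp (-(t * u ^ 2)) * Real.cos (a * u)
      = Real.sqrt (π / t) * Real.exp (-(a ^ 2) / (4 * t)) := by
  have hb : ((-t : ℂ)).re < 0 := by simpa using ht
  have key := integral_cexp_quadratic hb (a * I) 0
  have hint : Integrable (fun u : ℝ => cexp ((-t : ℂ) * u ^ 2 + (a * I) * u + 0)) :=
    integrable_cexp_quadratic' hb _ _
  have hre : ∀ u : ℝ, (cexp ((-t : ℂ) * u ^ 2 + (a * I) * u + 0)).re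
      = Real.exp (-(t * u ^ 2)) * Real.cos (a * u) := by
    intro u
    have h : (-t : ℂ) * u ^ 2 + (a * I) * u + 0
        = ((-(t * u ^ 2) : ℝ) : ℂ) + ((a * u : ℝ) : ℂ) * I := by
      push_cast; ring
    rw [h, Complex.exp_re]
    simp only [Complex.add_re, Complex.ofReal_re, Complex.mul_I_re, Complex.ofReal_im,
      Complex.add_im, Complex.mul_I_im]
    norm_num
  have h0 := integral_re hint
  simp only [RCLike.re_to_complex] at h0
  have h3 : ∫ u : ℝ, Real.exp (-(t * u ^ 2)) * Real.cos (a * u)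
      = (∫ u : ℝ, cexp ((-t : ℂ) * u ^ 2 + (a * I) * u + 0)).re := by
    rw [← h0]
    exact integral_congr_ae (Filter.Eventually.of_forall fun u => (hre u).symm)
  rw [h3, key]
  have h1 : ((π : ℂ) / -(-t : ℂ)) ^ (1 / 2 : ℂ) = ((Real.sqrt (π / t) : ℝ) : ℂ) := by
    rw [Real.sqrt_eq_rpow, Complex.ofReal_cpow (by positivity)]
    norm_num
  have h2 : (0 : ℂ) - ((a : ℂ) * I) ^ 2 / (4 * (-t : ℂ)) = ((-(a ^ 2) / (4 * t) : ℝ) : ℂ) := by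
    have ht' : (t : ℂ) ≠ 0 := by exact_mod_cast ht.ne'
    field_simp
    ring_nf
    simp [Complex.I_sq]
    have htt : (t : ℂ) * (t : ℂ)⁻¹ = 1 := mul_inv_cancel₀ ht'
    linear_combination ((a : ℂ) ^ 2) * htt
  rw [h1, h2, ← Complex.ofReal_exp, ← Complex.ofReal_mul, Complex.ofReal_re]

lemma half_line_integral (t a : ℝ) (ht : 0 < t) :
    ∫ u in Ioi (0:ℝ), Real.exp (-(t * u ^ 2)) * (1 - Real.cos (a * u))
      = (Real.sqrt (π / t) * (1 - Real.exp (-(a ^ 2) / (4 * t)))) / 2 := by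
  set f : ℝ → ℝ := fun u => Real.exp (-(t * u ^ 2)) * (1 - Real.cos (a * u)) with hf
  have habs := integral_comp_abs (f := f)
  have heven : ∀ u : ℝ, f |u| = f u := by
    intro u
    rcases abs_choice u with h | h <;> rw [hf] <;> simp only [h, neg_sq, mul_neg, Real.cos_neg]
  have h1 : ∫ u : ℝ, f |u| = ∫ u : ℝ, f u :=
    integral_congr_ae (Filter.Eventually.of_forall heven)
  have hintc : Integrable (fun u : ℝ => Real.exp (-(t * u ^ 2)) * Real.cos (a * u)) := by
    refine (integrable_exp_neg_mul_sq ht).mono'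
      (Continuous.aestronglyMeasurable (by continuity)) (Filter.Eventually.of_forall fun u => ?_)
    rw [norm_mul, Real.norm_eq_abs, Real.norm_eq_abs, Real.abs_exp, neg_mul]
    calc Real.exp (-(t * u ^ 2)) * |Real.cos (a * u)| ≤ Real.exp (-(t * u ^ 2)) * 1 := by
          gcongr; exact Real.abs_cos_le_one _
      _ = Real.exp (-(t * u ^ 2)) := mul_one _
  have hinte : Integrable (fun u : ℝ => Real.exp (-(t * u ^ 2))) := by
    simpa [neg_mul] using integrable_exp_neg_mul_sq ht
  have h2 : ∫ u : ℝ, f u = Real.sqrt (π / t) - Real.sqrt (π / t) * Real.exp (-(a ^ 2) / (4 * t)) := by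
    have : ∀ u : ℝ, f u = Real.exp (-(t * u ^ 2)) - Real.exp (-(t * u ^ 2)) * Real.cos (a * u) := by
      intro u; rw [hf]; ring
    rw [integral_congr_ae (Filter.Eventually.of_forall this), integral_sub hinte hintc,
      cos_gaussian_integral t a ht]
    congr 1
    simpa [neg_mul] using integral_gaussian t
  rw [h1, h2] at habs
  rw [eq_div_iff (two_ne_zero), mul_comm _ (2:ℝ), ← habs]
  ring

theorem gaussian_tail_laplace_rep (x t : ℝ) (hx : 0 < x) (ht : 0 < t) :
    (1 / Real.sqrt (2 * π * t)) * (1 - Real.exp (-(x ^ 2) / (2 * t))) =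
      (1 / Real.sqrt (2 * π)) *
        ∫ z in Ioi (0 : ℝ),
          Real.exp (-(t * z)) * (2 * Real.sin (x * Real.sqrt (z / 2)) ^ 2 / Real.sqrt (π * z)) := by
  set g : ℝ → ℝ := fun z =>
    Real.exp (-(t * z)) * (2 * Real.sin (x * Real.sqrt (z / 2)) ^ 2 / Real.sqrt (π * z)) with hg
  have hsub := integral_comp_rpow_Ioi_of_pos (g := g) (p := 2) two_pos
  have hπ : (0:ℝ) < Real.sqrt π := Real.sqrt_pos.mpr pi_pos
  have h2 : Real.sqrt 2 * Real.sqrt 2 = 2 := Real.mul_self_sqrt (by norm_num)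
  have h2pos : (0:ℝ) < Real.sqrt 2 := Real.sqrt_pos.mpr (by norm_num)
  have hpt : ∀ u ∈ Ioi (0:ℝ), ((2:ℝ) * u ^ ((2:ℝ) - 1)) • g (u ^ (2:ℝ))
      = (2 / Real.sqrt π) * (Real.exp (-(t * u ^ 2)) * (1 - Real.cos ((Real.sqrt 2 * x) * u))) := by
    intro u hu
    have hu0 : (0:ℝ) < u := hu
    have hr2 : u ^ (2:ℝ) = u ^ 2 := by
      rw [show (2:ℝ) = ((2:ℕ):ℝ) by norm_num, Real.rpow_natCast]
    have hr1 : u ^ ((2:ℝ) - 1) = u := by norm_num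
    have hs1 : Real.sqrt (u ^ 2 / 2) = u / Real.sqrt 2 := by
      rw [Real.sqrt_div (sq_nonneg u), Real.sqrt_sq hu0.le]
    have hs2 : Real.sqrt (π * u ^ 2) = Real.sqrt π * u := by
      rw [Real.sqrt_mul pi_pos.le, Real.sqrt_sq hu0.le]
    have hsin : 2 * Real.sin (x * (u / Real.sqrt 2)) ^ 2
        = 1 - Real.cos ((Real.sqrt 2 * x) * u) := by
      have := Real.sin_sq_eq_half_sub (x * (u / Real.sqrt 2))
      have hd : (2:ℝ) / Real.sqrt 2 = Real.sqrt 2 := by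
        rw [div_eq_iff h2pos.ne']; exact h2.symm
      have harg : 2 * (x * (u / Real.sqrt 2)) = (Real.sqrt 2 * x) * u := by
        calc 2 * (x * (u / Real.sqrt 2)) = (2 / Real.sqrt 2) * (x * u) := by ring
          _ = Real.sqrt 2 * (x * u) := by rw [hd]
          _ = (Real.sqrt 2 * x) * u := by ring
      rw [← harg]
      linarith
    simp only [hg, smul_eq_mul]
    rw [hr2, hr1, hs1, hs2, hsin]
    field_simp
  have hint1 : ∫ u in Ioi (0:ℝ), ((2:ℝ) * u ^ ((2:ℝ) - 1)) • g (u ^ (2:ℝ))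
      = ∫ u in Ioi (0:ℝ),
        (2 / Real.sqrt π) * (Real.exp (-(t * u ^ 2)) * (1 - Real.cos ((Real.sqrt 2 * x) * u))) :=
    setIntegral_congr_fun measurableSet_Ioi hpt
  have hval : ∫ z in Ioi (0:ℝ), g z
      = (2 / Real.sqrt π) *
        ((Real.sqrt (π / t) * (1 - Real.exp (-((Real.sqrt 2 * x) ^ 2) / (4 * t)))) / 2) := by
    rw [← hsub, hint1, integral_const_mul, half_line_integral t (Real.sqrt 2 * x) ht]
  have hexp : -((Real.sqrt 2 * x) ^ 2) / (4 * t) = -(x ^ 2) / (2 * t) := by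
    rw [mul_pow]
    rw [show Real.sqrt 2 ^ 2 = 2 by rw [sq]; exact h2]
    field_simp
    ring
  rw [hval, hexp]
  have hst : (0:ℝ) < Real.sqrt t := Real.sqrt_pos.mpr ht
  have hs2π : (0:ℝ) < Real.sqrt (2 * π) := Real.sqrt_pos.mpr (by positivity)
  have hmul : Real.sqrt (2 * π * t) = Real.sqrt (2 * π) * Real.sqrt t :=
    Real.sqrt_mul (by positivity) t
  have hdiv : Real.sqrt (π / t) = Real.sqrt π / Real.sqrt t := Real.sqrt_div pi_pos.le t
  rw [hmul, hdiv]
  field_simp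
end

section
/- For α > 1, the function ν^Γ_α(t) = (1/√(2πt)) ∫₀^∞ (1 - e^{-x²/(2t)}) e^{-(α+2)x}/(1 - e^{-2x}) dx is completely monotone in t on (0,∞). -/
open Real MeasureTheory Set


lemma even_integral (f : ℝ → ℝ) (hf : ∀ x, f (-x) = f x) (hi : Integrable f) :
    ∫ x : ℝ, f x = 2 * ∫ x in Ioi (0:ℝ), f x := by
  have h := intervalIntegral.integral_Iic_add_Ioi (b := (0:ℝ)) hi.integrableOn hi.integrableOn
  have h2 : ∫ x in Iic (0:ℝ), f x = ∫ x in Ioi (0:ℝ), f x := by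
    rw [← neg_zero, ← integral_comp_neg_Ioi]
    simp only [hf, neg_zero]
  rw [← h, h2]; ring

lemma cos_gaussian (b x : ℝ) (hb : 0 < b) :
    ∫ u : ℝ, Real.exp (-b * u ^ 2) * Real.cos (x * u)
      = Real.sqrt (π / b) * Real.exp (-(x ^ 2) / (4 * b)) := by
  have hb' : (0:ℝ) < (b : ℂ).re := by simpa using hb
  have key := fourierIntegral_gaussian (b := (b:ℂ)) hb' (x : ℂ)
  have hint : Integrable (fun u : ℝ => Complex.exp (Complex.I * x * u) * Complex.exp (-(b:ℂ) * u ^ 2)) := by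
    have h0 := integrable_cexp_quadratic (b := (b:ℂ)) hb' (Complex.I * x) 0
    have : (fun u : ℝ => Complex.exp (Complex.I * x * u) * Complex.exp (-(b:ℂ) * u ^ 2))
        = fun u : ℝ => Complex.exp (-(b:ℂ) * u ^ 2 + (Complex.I * x) * u + 0) := by
      funext u; rw [← Complex.exp_add]; ring_nf
    rw [this]; exact h0
  have hL : ∀ u : ℝ, (Complex.exp (Complex.I * x * u) * Complex.exp (-(b:ℂ) * u ^ 2)).re
      = Real.exp (-b * u ^ 2) * Real.cos (x * u) := by
    intro u
    have e1 : Complex.exp (-(b:ℂ) * u ^ 2) = ((Real.exp (-b * u ^ 2) : ℝ) : ℂ) := by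
      rw [Complex.ofReal_exp]; push_cast; ring_nf
    have e2 : Complex.exp (Complex.I * x * u) = Complex.exp (((x * u : ℝ) : ℂ) * Complex.I) := by
      push_cast; ring_nf
    rw [e1, e2, mul_comm, Complex.re_ofReal_mul, Complex.exp_ofReal_mul_I_re]
  have hR : (((π : ℂ) / b) ^ (1/2 : ℂ) * Complex.exp (-(x:ℂ) ^ 2 / (4 * b))).re
      = Real.sqrt (π / b) * Real.exp (-(x ^ 2) / (4 * b)) := by
    have e1 : ((π : ℂ) / b) ^ (1/2 : ℂ) = ((Real.sqrt (π / b) : ℝ) : ℂ) := by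
      rw [show ((π:ℂ)/b) = (((π/b : ℝ)):ℂ) by push_cast; ring,
        show ((1/2 : ℂ)) = (((1/2:ℝ):ℝ):ℂ) by norm_num,
        ← Complex.ofReal_cpow (by positivity) (1/2 : ℝ)]
      norm_num [Real.sqrt_eq_rpow]
    have e2 : Complex.exp (-(x:ℂ) ^ 2 / (4 * b)) = ((Real.exp (-(x ^ 2) / (4 * b)) : ℝ) : ℂ) := by
      rw [Complex.ofReal_exp]; push_cast; ring_nf
    rw [e1, e2, Complex.re_ofReal_mul, Complex.ofReal_re]
  calc ∫ u : ℝ, Real.exp (-b * u ^ 2) * Real.cos (x * u)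
      = ∫ u : ℝ, RCLike.re (Complex.exp (Complex.I * x * u) * Complex.exp (-(b:ℂ) * u ^ 2)) := by
        congr 1; funext u; rw [RCLike.re_to_complex, hL u]
    _ = RCLike.re (∫ u : ℝ, Complex.exp (Complex.I * x * u) * Complex.exp (-(b:ℂ) * u ^ 2)) :=
        integral_re hint
    _ = Real.sqrt (π / b) * Real.exp (-(x ^ 2) / (4 * b)) := by
        rw [key, RCLike.re_to_complex, hR]


noncomputable def gg (α x : ℝ) : ℝ := Real.exp (-((α + 2) * x)) / (1 - Real.exp (-(2 * x)))

lemma gg_meas (α : ℝ) : Measurable (gg α) := by unfold gg; fun_prop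

lemma gg_nonneg (α : ℝ) {x : ℝ} (hx : 0 < x) : 0 ≤ gg α x := by
  apply div_nonneg (Real.exp_nonneg _)
  have : Real.exp (-(2 * x)) < 1 := Real.exp_lt_one_iff.mpr (by linarith)
  linarith

lemma one_sub_exp_pos {x : ℝ} (hx : 0 < x) : 0 < 1 - Real.exp (-(2 * x)) := by
  have : Real.exp (-(2 * x)) < 1 := Real.exp_lt_one_iff.mpr (by linarith)
  linarith

lemma xgg_bound (α : ℝ) (hα : 1 < α) {x : ℝ} (hx : 0 < x) :
    x * gg α x ≤ (1 / 2 + 2 / (α + 2)) * Real.exp (-((α + 2) / 2 * x)) := by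
  have hc : (0:ℝ) < α + 2 := by linarith
  have h1 : 1 - Real.exp (-(2 * x)) ≥ 2 * x / (1 + 2 * x) := by
    have h2 : Real.exp (-(2 * x)) ≤ 1 / (1 + 2 * x) := by
      rw [Real.exp_neg, one_div]
      have h := Real.add_one_le_exp (2 * x)
      exact inv_anti₀ (by positivity) (by linarith)
    have h3 : 1 - 1 / (1 + 2 * x) = 2 * x / (1 + 2 * x) := by field_simp; ring
    linarith
  have hpos := one_sub_exp_pos hx
  have h4 : x / (1 - Real.exp (-(2 * x))) ≤ (1 + 2 * x) / 2 := by
    rw [div_le_div_iff₀ hpos (by norm_num)]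
    have h5 : (2 * x / (1 + 2 * x)) * ((1 + 2*x)/2) = x := by field_simp
    nlinarith [mul_le_mul_of_nonneg_right h1 (by positivity : (0:ℝ) ≤ (1 + 2*x)/2)]
  have key : x * gg α x ≤ (1 + 2 * x) / 2 * Real.exp (-((α + 2) * x)) := by
    unfold gg
    rw [mul_div_assoc', mul_comm, mul_div_assoc]
    exact mul_le_mul_of_nonneg_left h4 (Real.exp_nonneg _) |>.trans_eq (by ring)
  refine key.trans ?_
  -- (1+2x)/2 e^{-cx} ≤ (1/2 + 2/c) e^{-cx/2}
  have hxle : x ≤ (2 / (α + 2)) * Real.exp ((α + 2) / 2 * x) := by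
    have h6 : (α + 2) / 2 * x ≤ Real.exp ((α + 2) / 2 * x) := by
      have := Real.add_one_le_exp ((α + 2) / 2 * x); linarith
    calc x = (2 / (α + 2)) * ((α + 2) / 2 * x) := by field_simp
      _ ≤ (2 / (α + 2)) * Real.exp ((α + 2) / 2 * x) :=
        mul_le_mul_of_nonneg_left h6 (by positivity)
  have hsplit : Real.exp (-((α + 2) * x))
      = Real.exp (-((α + 2) / 2 * x)) * Real.exp (-((α + 2) / 2 * x)) := by
    rw [← Real.exp_add]; ring_nf
  have hexple : Real.exp (-((α + 2) / 2 * x)) ≤ 1 :=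
    Real.exp_le_one_iff.mpr (by nlinarith)
  have e1 : (1 + 2 * x) / 2 * Real.exp (-((α + 2) * x))
      = (1/2) * Real.exp (-((α+2)*x)) + x * Real.exp (-((α+2)*x)) := by ring
  rw [e1]
  have e2 : x * Real.exp (-((α+2)*x)) ≤ (2/(α+2)) * Real.exp (-((α + 2) / 2 * x)) := by
    rw [hsplit, ← mul_assoc]
    refine mul_le_mul_of_nonneg_right ?_ (Real.exp_nonneg _)
    calc x * Real.exp (-((α + 2) / 2 * x))
        ≤ (2 / (α + 2)) * Real.exp ((α + 2) / 2 * x) * Real.exp (-((α + 2) / 2 * x)) :=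
          mul_le_mul_of_nonneg_right hxle (Real.exp_nonneg _)
      _ = 2 / (α + 2) := by rw [mul_assoc, ← Real.exp_add]; simp
  have e3 : (1/2 : ℝ) * Real.exp (-((α+2)*x)) ≤ (1/2) * Real.exp (-((α + 2) / 2 * x)) := by
    refine mul_le_mul_of_nonneg_left ?_ (by norm_num)
    rw [hsplit]
    nlinarith [Real.exp_nonneg (-((α + 2) / 2 * x)), Real.exp_pos (-((α + 2) / 2 * x))]
  nlinarith [Real.exp_nonneg (-((α + 2) / 2 * x))]

lemma xgg_integrable (α : ℝ) (hα : 1 < α) :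
    IntegrableOn (fun x => x * gg α x) (Ioi (0:ℝ)) := by
  have hc : (0:ℝ) < (α + 2) / 2 := by linarith
  refine Integrable.mono ((exp_neg_integrableOn_Ioi 0 hc).const_mul (1 / 2 + 2 / (α + 2)))
    ((measurable_id.mul (gg_meas α)).aestronglyMeasurable) ?_
  filter_upwards [ae_restrict_mem measurableSet_Ioi] with x hx
  rw [Real.norm_eq_abs, Real.norm_eq_abs,
    abs_of_nonneg (mul_nonneg (le_of_lt hx) (gg_nonneg α hx)),
    abs_of_nonneg (by positivity)]
  have := xgg_bound α hα hx
  calc x * gg α x ≤ (1 / 2 + 2 / (α + 2)) * Real.exp (-((α + 2) / 2 * x)) := this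
    _ = (1 / 2 + 2 / (α + 2)) * Real.exp (-((α + 2) / 2) * x) := by ring_nf

lemma pow_le_factorial_mul_exp {x : ℝ} (hx : 0 ≤ x) (n : ℕ) :
    x ^ n ≤ n.factorial * Real.exp x := by
  have h := Real.sum_le_exp_of_nonneg hx (n + 1)
  have h2 : x ^ n / n.factorial ≤ ∑ i ∈ Finset.range (n + 1), x ^ i / i.factorial :=
    Finset.single_le_sum (f := fun i => x ^ i / (i.factorial : ℝ))
      (fun i _ => by positivity) (Finset.self_mem_range_succ n)
  have h3 : (0:ℝ) < n.factorial := by positivity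
  calc x ^ n ≤ (∑ i ∈ Finset.range (n + 1), x ^ i / i.factorial) * n.factorial :=
      (div_le_iff₀ h3).mp h2
    _ ≤ Real.exp x * n.factorial := mul_le_mul_of_nonneg_right h (le_of_lt h3)
    _ = n.factorial * Real.exp x := mul_comm _ _



lemma gausscos_integrable (b x : ℝ) (hb : 0 < b) :
    Integrable (fun u : ℝ => Real.exp (-b * u ^ 2) * Real.cos (x * u)) := by
  refine (integrable_exp_neg_mul_sq hb).mono ((by fun_prop : Measurable fun u : ℝ => Real.exp (-b * u ^ 2) * Real.cos (x * u)).aestronglyMeasurable) ?_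
  filter_upwards with u
  rw [Real.norm_eq_abs, Real.norm_eq_abs, abs_of_nonneg (Real.exp_nonneg _), abs_mul,
    abs_of_nonneg (Real.exp_nonneg _)]
  nlinarith [abs_cos_le_one (x * u), Real.exp_nonneg (-b * u ^ 2), abs_nonneg (Real.cos (x*u))]

lemma cos_gaussian_Ioi (b x : ℝ) (hb : 0 < b) :
    ∫ u in Ioi (0:ℝ), Real.exp (-b * u ^ 2) * Real.cos (x * u)
      = Real.sqrt (π / b) * Real.exp (-(x ^ 2) / (4 * b)) / 2 := by
  have he : ∀ u : ℝ, Real.exp (-b * (-u) ^ 2) * Real.cos (x * (-u))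
      = Real.exp (-b * u ^ 2) * Real.cos (x * u) := by
    intro u; rw [neg_sq, mul_neg, Real.cos_neg]
  have h := even_integral _ he (gausscos_integrable b x hb)
  rw [cos_gaussian b x hb] at h
  linarith

lemma sqrt_aux (c : ℝ) (hc : 0 < c) :
    Real.sqrt (π / (c / 2)) = 2 * π / Real.sqrt (2 * π * c) := by
  rw [eq_div_iff (by positivity : Real.sqrt (2 * π * c) ≠ 0),
    ← Real.sqrt_mul (by positivity),
    show π / (c / 2) * (2 * π * c) = (2 * π) ^ 2 by field_simp]
  exact Real.sqrt_sq (by positivity)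

lemma kernel_eq (c x : ℝ) (hc : 0 < c) :
    ∫ u in Ioi (0:ℝ), Real.exp (-(c / 2) * u ^ 2) * ((1 - Real.cos (x * u)) / π)
      = (1 - Real.exp (-(x ^ 2) / (2 * c))) / Real.sqrt (2 * π * c) := by
  have hc2 : 0 < c / 2 := by linarith
  have hg : IntegrableOn (fun u : ℝ => Real.exp (-(c / 2) * u ^ 2)) (Ioi 0) :=
    (integrable_exp_neg_mul_sq hc2).integrableOn
  have hgc : IntegrableOn (fun u : ℝ => Real.exp (-(c / 2) * u ^ 2) * Real.cos (x * u)) (Ioi 0) :=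
    (gausscos_integrable (c/2) x hc2).integrableOn
  have e1 : ∀ u : ℝ, Real.exp (-(c / 2) * u ^ 2) * ((1 - Real.cos (x * u)) / π)
      = (1 / π) * (Real.exp (-(c / 2) * u ^ 2)
        - Real.exp (-(c / 2) * u ^ 2) * Real.cos (x * u)) := by
    intro u; field_simp
  rw [show (fun u : ℝ => Real.exp (-(c / 2) * u ^ 2) * ((1 - Real.cos (x * u)) / π)) =
    (fun u : ℝ => (1 / π) * (Real.exp (-(c / 2) * u ^ 2)
        - Real.exp (-(c / 2) * u ^ 2) * Real.cos (x * u))) from funext e1]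
  rw [integral_const_mul, integral_sub hg hgc, integral_gaussian_Ioi,
    cos_gaussian_Ioi (c/2) x hc2, sqrt_aux c hc,
    show (4 * (c / 2)) = 2 * c by ring]
  have hS : (0:ℝ) < Real.sqrt (2 * π * c) := Real.sqrt_pos.mpr (by positivity)
  field_simp



noncomputable def ρm : Measure (ℝ × ℝ) :=
  (volume.restrict (Ioi 0)).prod (volume.restrict (Ioi 0))

noncomputable def Hf (α : ℝ) (p : ℝ × ℝ) : ℝ := (1 - Real.cos (p.1 * p.2)) / π * gg α p.1

lemma Hf_meas (α : ℝ) : Measurable (Hf α) := by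
  have hg := gg_meas α
  unfold Hf; fun_prop

lemma ae_mem_rho : ∀ᵐ p : ℝ × ℝ ∂ρm, 0 < p.1 ∧ 0 < p.2 := by
  rw [ρm, Measure.prod_restrict]
  filter_upwards [ae_restrict_mem (measurableSet_Ioi.prod measurableSet_Ioi)] with p hp
  exact ⟨hp.1, hp.2⟩

lemma Hf_nonneg (α : ℝ) : ∀ᵐ p : ℝ × ℝ ∂ρm, 0 ≤ Hf α p := by
  filter_upwards [ae_mem_rho] with p hp
  have h1 : Real.cos (p.1 * p.2) ≤ 1 := Real.cos_le_one _
  have := gg_nonneg α hp.1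
  unfold Hf
  have hπ := Real.pi_pos
  exact mul_nonneg (div_nonneg (by linarith) hπ.le) this

lemma one_sub_exp_le (c : ℝ) (hc : 0 < c) {x : ℝ} (hx : 0 < x) :
    1 - Real.exp (-(x ^ 2) / (2 * c)) ≤ (1 + 1 / (2 * c)) * x := by
  rcases le_total x 1 with h | h
  · have h1 : 1 - Real.exp (-(x ^ 2) / (2 * c)) ≤ x ^ 2 / (2 * c) := by
      have h2 := Real.add_one_le_exp (-(x ^ 2) / (2 * c))
      rw [show -(x ^ 2) / (2 * c) = -(x ^ 2 / (2 * c)) from by ring] at h2 ⊢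
      linarith
    have h3 : x ^ 2 / (2 * c) ≤ x * (1 / (2 * c)) := by
      rw [div_le_iff₀ (by positivity)]
      have : x ^ 2 ≤ x := by nlinarith
      calc x ^ 2 ≤ x := this
        _ = x * (1 / (2 * c)) * (2 * c) := by field_simp
    nlinarith
  · have h4 := Real.exp_nonneg (-(x ^ 2) / (2 * c))
    have h5 : (0:ℝ) < 1 / (2 * c) := by positivity
    nlinarith

-- base integrability
lemma base_integrable (α : ℝ) (hα : 1 < α) {c : ℝ} (hc : 0 < c) :
    Integrable (fun p : ℝ × ℝ => Real.exp (-(c * (p.2 ^ 2 / 2))) * Hf α p) ρm := by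
  have hc2 : 0 < c / 2 := by linarith
  have hmeas : AEStronglyMeasurable
      (fun p : ℝ × ℝ => Real.exp (-(c * (p.2 ^ 2 / 2))) * Hf α p) ρm := by
    have hm := Hf_meas α
    refine Measurable.aestronglyMeasurable (by fun_prop)
  rw [ρm, integrable_prod_iff hmeas]
  constructor
  · filter_upwards [ae_restrict_mem measurableSet_Ioi] with x hx
    -- section in u
    have hb : Integrable (fun u : ℝ => (2 / π * gg α x) * Real.exp (-(c / 2) * u ^ 2))
        (volume.restrict (Ioi 0)) :=
      ((integrable_exp_neg_mul_sq hc2).integrableOn).const_mul _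
    have hmeas_sec : Measurable fun u : ℝ => Real.exp (-(c * (u ^ 2 / 2))) * Hf α (x, u) :=
      (Real.measurable_exp.comp
        ((((measurable_id.pow_const 2).div_const 2).const_mul c).neg)).mul
        ((Hf_meas α).comp measurable_prodMk_left)
    refine hb.mono hmeas_sec.aestronglyMeasurable ?_
    filter_upwards with u
    have hπ := Real.pi_pos
    have hcos1 : Real.cos (x * u) ≤ 1 := Real.cos_le_one _
    have hcos2 : -1 ≤ Real.cos (x * u) := Real.neg_one_le_cos _
    have hg := gg_nonneg α hx
    have hHnn : 0 ≤ Hf α (x, u) :=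
      mul_nonneg (div_nonneg (by simp only; linarith) hπ.le) hg
    rw [Real.norm_eq_abs, Real.norm_eq_abs]
    rw [abs_of_nonneg (mul_nonneg (Real.exp_nonneg _) hHnn), abs_of_nonneg (by positivity)]
    have e1 : Real.exp (-(c * (u ^ 2 / 2))) = Real.exp (-(c / 2) * u ^ 2) := by ring_nf
    rw [e1]
    unfold Hf
    have h2 : (1 - Real.cos (x * u)) / π * gg α x ≤ 2 / π * gg α x := by
      have hle : (1 - Real.cos (x * u)) ≤ 2 := by linarith
      gcongr
    calc Real.exp (-(c / 2) * u ^ 2) * ((1 - Real.cos (x * u)) / π * gg α x)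
        ≤ Real.exp (-(c / 2) * u ^ 2) * (2 / π * gg α x) :=
          mul_le_mul_of_nonneg_left h2 (Real.exp_nonneg _)
      _ = 2 / π * gg α x * Real.exp (-(c / 2) * u ^ 2) := by ring
  · -- integral of norms in u, as function of x
    have hSpos : 0 < Real.sqrt (2 * π * c) := Real.sqrt_pos.mpr (by positivity)
    refine Integrable.mono' (((xgg_integrable α hα).const_mul
        ((1 + 1 / (2 * c)) / Real.sqrt (2 * π * c)))) (hmeas.norm.integral_prod_right') ?_
    filter_upwards [ae_restrict_mem measurableSet_Ioi] with x hx
    have hg := gg_nonneg α hx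
    have hπ := Real.pi_pos
    -- compute the inner integral
    have e0 : ∀ u : ℝ, ‖Real.exp (-(c * (u ^ 2 / 2))) * Hf α (x, u)‖
        = Real.exp (-(c / 2) * u ^ 2) * ((1 - Real.cos (x * u)) / π) * gg α x := by
      intro u
      have hcos1 : Real.cos (x * u) ≤ 1 := Real.cos_le_one _
      have hHnn : 0 ≤ Hf α (x, u) :=
        mul_nonneg (div_nonneg (by simp only; linarith) hπ.le) hg
      rw [Real.norm_eq_abs, abs_of_nonneg (mul_nonneg (Real.exp_nonneg _) hHnn)]
      unfold Hf
      have e1 : Real.exp (-(c * (u ^ 2 / 2))) = Real.exp (-(c / 2) * u ^ 2) := by ring_nf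
      rw [e1]; ring
    rw [Real.norm_eq_abs]
    have e2 : ∫ u in Ioi (0:ℝ), ‖Real.exp (-(c * (u ^ 2 / 2))) * Hf α (x, u)‖
        = ((1 - Real.exp (-(x ^ 2) / (2 * c))) / Real.sqrt (2 * π * c)) * gg α x := by
      rw [show (fun u => ‖Real.exp (-(c * (u ^ 2 / 2))) * Hf α (x, u)‖)
          = fun u => Real.exp (-(c / 2) * u ^ 2) * ((1 - Real.cos (x * u)) / π) * gg α x from
          funext e0]
      rw [integral_mul_const, kernel_eq c x hc]
    have h5 : Real.exp (-(x ^ 2) / (2 * c)) ≤ 1 :=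
      Real.exp_le_one_iff.mpr
        (div_nonpos_of_nonpos_of_nonneg (neg_nonpos.mpr (sq_nonneg x)) (by positivity))
    rw [e2, abs_of_nonneg (mul_nonneg (div_nonneg (by linarith) hSpos.le) hg)]
    have h6 := one_sub_exp_le c hc hx
    have h7 : (1 - Real.exp (-(x ^ 2) / (2 * c))) / Real.sqrt (2 * π * c) * gg α x
        ≤ ((1 + 1 / (2 * c)) * x) / Real.sqrt (2 * π * c) * gg α x := by
      gcongr
    calc (1 - Real.exp (-(x ^ 2) / (2 * c))) / Real.sqrt (2 * π * c) * gg α x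
        ≤ ((1 + 1 / (2 * c)) * x) / Real.sqrt (2 * π * c) * gg α x := h7
      _ = (1 + 1 / (2 * c)) / Real.sqrt (2 * π * c) * (x * gg α x) := by ring



noncomputable def Gf (α : ℝ) (n : ℕ) (t : ℝ) : ℝ :=
  ∫ p : ℝ × ℝ, (p.2 ^ 2 / 2) ^ n * Real.exp (-(t * (p.2 ^ 2 / 2))) * Hf α p ∂ρm

lemma pow_exp_le {y c : ℝ} (hy : 0 ≤ y) (hc : 0 < c) (n : ℕ) :
    y ^ n * Real.exp (-(c * y)) ≤ n.factorial * (2 / c) ^ n * Real.exp (-(c / 2 * y)) := by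
  have h1 : (c / 2 * y) ^ n ≤ n.factorial * Real.exp (c / 2 * y) :=
    pow_le_factorial_mul_exp (by positivity) n
  have h2 : y ^ n ≤ n.factorial * (2 / c) ^ n * Real.exp (c / 2 * y) := by
    have h3 : y ^ n = (2 / c) ^ n * (c / 2 * y) ^ n := by
      rw [← mul_pow]; congr 1; field_simp
    rw [h3]
    calc (2 / c) ^ n * (c / 2 * y) ^ n
        ≤ (2 / c) ^ n * (n.factorial * Real.exp (c / 2 * y)) :=
          mul_le_mul_of_nonneg_left h1 (by positivity)
      _ = n.factorial * (2 / c) ^ n * Real.exp (c / 2 * y) := by ring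
  calc y ^ n * Real.exp (-(c * y))
      ≤ (n.factorial * (2 / c) ^ n * Real.exp (c / 2 * y)) * Real.exp (-(c * y)) :=
        mul_le_mul_of_nonneg_right h2 (Real.exp_nonneg _)
    _ = n.factorial * (2 / c) ^ n * Real.exp (-(c / 2 * y)) := by
        rw [mul_assoc, mul_assoc, ← Real.exp_add]; ring_nf

lemma full_integrable (α : ℝ) (hα : 1 < α) {c : ℝ} (hc : 0 < c) (n : ℕ) :
    Integrable (fun p : ℝ × ℝ => (p.2 ^ 2 / 2) ^ n
      * Real.exp (-(c * (p.2 ^ 2 / 2))) * Hf α p) ρm := by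
  have hc2 : 0 < c / 2 := by linarith
  have hb := (base_integrable α hα hc2).const_mul ((n.factorial : ℝ) * (2 / c) ^ n)
  have hm := Hf_meas α
  refine hb.mono (Measurable.aestronglyMeasurable (by fun_prop)) ?_
  filter_upwards [Hf_nonneg α] with p hp
  have hy : (0:ℝ) ≤ p.2 ^ 2 / 2 := by positivity
  rw [Real.norm_eq_abs, Real.norm_eq_abs, abs_of_nonneg (by positivity),
    abs_of_nonneg (by positivity)]
  have key := pow_exp_le hy hc n
  calc (p.2 ^ 2 / 2) ^ n * Real.exp (-(c * (p.2 ^ 2 / 2))) * Hf α p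
      ≤ (n.factorial * (2 / c) ^ n * Real.exp (-(c / 2 * (p.2 ^ 2 / 2)))) * Hf α p :=
        mul_le_mul_of_nonneg_right key hp
    _ = (n.factorial : ℝ) * (2 / c) ^ n * (Real.exp (-(c / 2 * (p.2 ^ 2 / 2))) * Hf α p) := by
        ring

lemma G_eval (α : ℝ) (hα : 1 < α) {t : ℝ} (ht : 0 < t) :
    Gf α 0 t = (1 / Real.sqrt (2 * π * t)) *
      ∫ x in Ioi (0:ℝ), (1 - Real.exp (-(x ^ 2) / (2 * t))) * Real.exp (-((α + 2) * x)) /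
        (1 - Real.exp (-(2 * x))) := by
  have hint := full_integrable α hα ht 0
  unfold Gf
  rw [show ρm = (volume.restrict (Ioi 0)).prod (volume.restrict (Ioi 0)) from rfl] at *
  rw [MeasureTheory.integral_prod _ hint]
  have inner : ∀ x : ℝ, (∫ u in Ioi (0:ℝ), (u ^ 2 / 2) ^ 0
      * Real.exp (-(t * (u ^ 2 / 2))) * Hf α (x, u))
      = (1 / Real.sqrt (2 * π * t)) * ((1 - Real.exp (-(x ^ 2) / (2 * t))) * gg α x) := by
    intro x
    have e0 : (fun u : ℝ => (u ^ 2 / 2) ^ 0 * Real.exp (-(t * (u ^ 2 / 2))) * Hf α (x, u))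
        = fun u : ℝ => Real.exp (-(t / 2) * u ^ 2) * ((1 - Real.cos (x * u)) / π) * gg α x := by
      funext u
      show (u ^ 2 / 2) ^ 0 * Real.exp (-(t * (u ^ 2 / 2))) * ((1 - Real.cos (x * u)) / π * gg α x)
        = _
      rw [pow_zero, one_mul, show -(t * (u ^ 2 / 2)) = -(t / 2) * u ^ 2 from by ring]
      ring
    rw [e0, integral_mul_const, kernel_eq t x ht]
    rw [div_eq_mul_one_div, mul_comm (1 - Real.exp (-(x ^ 2) / (2 * t))) _, mul_assoc]
  rw [show (fun x : ℝ => ∫ u in Ioi (0:ℝ), (u ^ 2 / 2) ^ 0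
      * Real.exp (-(t * (u ^ 2 / 2))) * Hf α (x, u))
      = fun x : ℝ => (1 / Real.sqrt (2 * π * t)) * ((1 - Real.exp (-(x ^ 2) / (2 * t))) * gg α x)
      from funext inner]
  rw [integral_const_mul]
  congr 1
  congr 1
  funext x
  rw [gg, mul_div_assoc]



lemma G_nonneg (α : ℝ) (n : ℕ) (t : ℝ) : 0 ≤ Gf α n t := by
  refine integral_nonneg_of_ae ?_
  filter_upwards [Hf_nonneg α] with p hp
  exact mul_nonneg (mul_nonneg (by positivity) (Real.exp_nonneg _)) hp

lemma G_hasDeriv (α : ℝ) (hα : 1 < α) (n : ℕ) {t : ℝ} (ht : 0 < t) :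
    HasDerivAt (Gf α n) (-(Gf α (n + 1) t)) t := by
  have hε : (0:ℝ) < t / 2 := by linarith
  have ht4 : (0:ℝ) < t / 4 := by linarith
  have hm := Hf_meas α
  have key := hasDerivAt_integral_of_dominated_loc_of_deriv_le (μ := ρm)
    (F := fun t' (p : ℝ × ℝ) => (p.2 ^ 2 / 2) ^ n * Real.exp (-(t' * (p.2 ^ 2 / 2))) * Hf α p)
    (F' := fun t' (p : ℝ × ℝ) =>
      -((p.2 ^ 2 / 2) ^ (n + 1) * Real.exp (-(t' * (p.2 ^ 2 / 2))) * Hf α p))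
    (x₀ := t)
    (bound := fun p => ((n + 1).factorial : ℝ) * (4 / t) ^ (n + 1)
      * (Real.exp (-(t / 4 * (p.2 ^ 2 / 2))) * Hf α p))
    (Metric.ball_mem_nhds t hε)
    (Filter.Eventually.of_forall fun t' => Measurable.aestronglyMeasurable (by fun_prop))
    (full_integrable α hα ht n)
    (Measurable.aestronglyMeasurable (by fun_prop))
    ?_ ?_ ?_
  · have := key.2
    have e1 : (∫ p : ℝ × ℝ,
        -((p.2 ^ 2 / 2) ^ (n + 1) * Real.exp (-(t * (p.2 ^ 2 / 2))) * Hf α p) ∂ρm)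
        = -(Gf α (n + 1) t) := by
      rw [integral_neg]; rfl
    rw [e1] at this
    exact this
  · -- bound
    filter_upwards [Hf_nonneg α] with p hp
    intro t' ht'
    rw [Metric.mem_ball, Real.dist_eq, abs_lt] at ht'
    have ht2 : t / 2 < t' := by linarith
    have hy : (0:ℝ) ≤ p.2 ^ 2 / 2 := by positivity
    rw [norm_neg, Real.norm_eq_abs, abs_of_nonneg
      (mul_nonneg (mul_nonneg (by positivity) (Real.exp_nonneg _)) hp)]
    have h1 : Real.exp (-(t' * (p.2 ^ 2 / 2))) ≤ Real.exp (-(t / 2 * (p.2 ^ 2 / 2))) := by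
      apply Real.exp_le_exp.mpr
      have := mul_le_mul_of_nonneg_right ht2.le hy
      linarith
    have h2 := pow_exp_le hy hε (n + 1)
    have e4 : ((2 : ℝ) / (t / 2)) = 4 / t := by field_simp; ring
    rw [e4] at h2
    have e5 : t / 2 / 2 = t / 4 := by ring
    rw [e5] at h2
    calc (p.2 ^ 2 / 2) ^ (n + 1) * Real.exp (-(t' * (p.2 ^ 2 / 2))) * Hf α p
        ≤ (p.2 ^ 2 / 2) ^ (n + 1) * Real.exp (-(t / 2 * (p.2 ^ 2 / 2))) * Hf α p := by
          exact mul_le_mul_of_nonneg_right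
            (mul_le_mul_of_nonneg_left h1 (by positivity)) hp
      _ ≤ ((n + 1).factorial * (4 / t) ^ (n + 1) * Real.exp (-(t / 4 * (p.2 ^ 2 / 2)))) * Hf α p :=
          mul_le_mul_of_nonneg_right h2 hp
      _ = ((n + 1).factorial : ℝ) * (4 / t) ^ (n + 1)
          * (Real.exp (-(t / 4 * (p.2 ^ 2 / 2))) * Hf α p) := by ring
  · exact (base_integrable α hα ht4).const_mul _
  · -- differentiability
    filter_upwards with p
    intro t' _
    set s := p.2 ^ 2 / 2 with hs
    have h0 : HasDerivAt (fun τ : ℝ => -(τ * s)) (-s) t' := by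
      exact (((hasDerivAt_id t').mul_const s).neg).congr_deriv (by ring)
    have h1 := h0.exp
    have h2 := (h1.const_mul (s ^ n)).mul_const (Hf α p)
    exact h2.congr_deriv (by ring)

noncomputable def f₀ (α : ℝ) : ℝ → ℝ :=
  fun t => (1 / Real.sqrt (2 * π * t)) *
    ∫ x in Ioi (0 : ℝ),
      (1 - Real.exp (-(x ^ 2) / (2 * t))) * Real.exp (-((α + 2) * x)) /
        (1 - Real.exp (-(2 * x)))

lemma G_iter (α : ℝ) (hα : 1 < α) (n : ℕ) :
    ∀ t : ℝ, 0 < t → iteratedDeriv n (f₀ α) t = (-1:ℝ) ^ n * Gf α n t := by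
  induction n with
  | zero =>
    intro t ht
    rw [iteratedDeriv_zero, pow_zero, one_mul, G_eval α hα ht]
    rfl
  | succ n ih =>
    intro t ht
    rw [iteratedDeriv_succ]
    have hev : iteratedDeriv n (f₀ α) =ᶠ[nhds t] fun t' => (-1:ℝ) ^ n * Gf α n t' := by
      filter_upwards [isOpen_Ioi.mem_nhds ht] with t' ht'
      exact ih t' ht'
    rw [hev.deriv_eq]
    rw [((G_hasDeriv α hα n ht).const_mul ((-1:ℝ) ^ n)).deriv]
    ring

theorem nu_gamma_completely_monotone (α : ℝ) (hα : 1 < α) :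
    ∀ n : ℕ, ∀ t : ℝ, 0 < t →
      0 ≤ (-1 : ℝ) ^ n *
        iteratedDeriv n
          (fun t => (1 / Real.sqrt (2 * π * t)) *
            ∫ x in Ioi (0 : ℝ),
              (1 - Real.exp (-(x ^ 2) / (2 * t))) * Real.exp (-((α + 2) * x)) /
                (1 - Real.exp (-(2 * x)))) t := by
  intro n t ht
  have h := G_iter α hα n t ht
  rw [show (fun t => (1 / Real.sqrt (2 * π * t)) *
      ∫ x in Ioi (0 : ℝ),
        (1 - Real.exp (-(x ^ 2) / (2 * t))) * Real.exp (-((α + 2) * x)) /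
          (1 - Real.exp (-(2 * x)))) = f₀ α from rfl, h, ← mul_assoc, ← mul_pow]
  simpa using G_nonneg α n t
end
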